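/- arXiv:2404.08577 — 7 statements merged into one kernel-verified Lean document; each statement's English description precedes it below -/
import Mathlib

section
/- Let H=(V,E) be a connected finite simple graph with a fixed total order on E. Then the family of edge sets F ⊆ E such that (V,F) is connected is the disjoint union, over spanning trees T ⊆ E of H, of the intervals {F : T ⊆ F ⊆ T ∪ E_T}; that is, every connected spanning edge set F contains exactly one spanning tree T with T ⊆ F ⊆ T ∪ E_T. -/
open MeasureTheory

attribute [local instance] Classical.propDecidable

namespace VolumePaper

variable {V : Type} [Fintype V]

/-- The set of endpoints of a finite set of (potential) edges. -/
noncomputable def verts (T : Finset (Sym2 V)) : Finset V :=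
  Finset.univ.filter (fun v => ∃ e ∈ T, v ∈ e)

/-- `T` forms a tree (necessarily with at least one edge): the graph on the set of
endpoints of `T` whose edges are the members of `T` is a tree. -/
def IsTreeSet (T : Finset (Sym2 V)) : Prop :=
  (SimpleGraph.induce (↑(verts T) : Set V)
    (SimpleGraph.fromEdgeSet (↑T : Set (Sym2 V)))).IsTree

/-- The broken edges of `T` relative to the induced subgraph `G[S]` and a fixed
total edge order (given by an injective function `ord` into `ℕ`): edges `e` of `G[S]`
not in `T` such that `e` is the largest edge of a (the) cycle of `T ∪ {e}`. -/
noncomputable def brokenEdgesOn (G : SimpleGraph V) (ord : Sym2 V → ℕ) (S : Finset V)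
    (T : Finset (Sym2 V)) : Finset (Sym2 V) :=
  Finset.univ.filter (fun e =>
    e ∈ G.edgeSet ∧ (∀ v ∈ e, v ∈ S) ∧ e ∉ T ∧
    ∃ (u : V) (c : (SimpleGraph.fromEdgeSet (insert e (↑T : Set (Sym2 V)))).Walk u u),
      c.IsCycle ∧ e ∈ c.edges ∧ ∀ e' ∈ c.edges, ord e' ≤ ord e)

/-- The broken edges of a tree `T`, relative to the graph induced by `G` on the
endpoints of `T`. -/
noncomputable def brokenEdges (G : SimpleGraph V) (ord : Sym2 V → ℕ)
    (T : Finset (Sym2 V)) : Finset (Sym2 V) :=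
  brokenEdgesOn G ord (verts T) T

/-- Indicator (as a real number) of the event `x_u + x_v > 1` on an unordered pair. -/
noncomputable def indGt (x : V → ℝ) : Sym2 V → ℝ :=
  Sym2.lift ⟨fun u v => if 1 < x u + x v then 1 else 0, by intro a b; dsimp only; rw [add_comm]⟩

/-- Indicator (as a real number) of the event `x_u + x_v ≤ 1` on an unordered pair. -/
noncomputable def indLe (x : V → ℝ) : Sym2 V → ℝ :=
  Sym2.lift ⟨fun u v => if x u + x v ≤ 1 then 1 else 0, by intro a b; dsimp only; rw [add_comm]⟩

/-- Extension of a function on a finite subset of coordinates by `0`. -/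
noncomputable def extFun (S : Finset V) (x : {v // v ∈ S} → ℝ) : V → ℝ :=
  fun v => if h : v ∈ S then x ⟨v, h⟩ else 0

/-- The integral `∫_{[0,1/2+δ]^S} ∏_{uv ∈ T} 1[x_u+x_v>1] ∏_{st ∈ E_T} 1[x_s+x_t ≤ 1] dμ`,
where `E_T` is the set of broken edges of `T` relative to `G[S]`. -/
noncomputable def treeIntegral (G : SimpleGraph V) (ord : Sym2 V → ℕ) (δ : ℝ)
    (S : Finset V) (T : Finset (Sym2 V)) : ℝ :=
  ∫ x : {v // v ∈ S} → ℝ in Set.univ.pi (fun _ => Set.Icc (0:ℝ) (1/2 + δ)),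
    (∏ e ∈ T, indGt (extFun S x) e) * ∏ e ∈ brokenEdgesOn G ord S T, indLe (extFun S x) e

/-- The weight `w_T` of a tree `T` of edges of `G`. -/
noncomputable def treeWeight (G : SimpleGraph V) (ord : Sym2 V → ℕ) (δ : ℝ)
    (T : Finset (Sym2 V)) : ℝ :=
  (1/2 + δ) ^ (-((verts T).card : ℤ)) * (-1 : ℝ) ^ T.card *
    treeIntegral G ord δ (verts T) T

/-- The connected components (each having at least one edge) of a set `F` of edges. -/
noncomputable def comps (F : Finset (Sym2 V)) : Finset (Finset (Sym2 V)) :=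
  F.image (fun e => F.filter (fun e' => ∃ u ∈ e, ∃ v ∈ e',
    (SimpleGraph.fromEdgeSet (↑F : Set (Sym2 V))).Reachable u v))

/-- `F` is a forest of edges of `G` all of whose endpoints lie in `S`. -/
def IsForestOn (G : SimpleGraph V) (S : Finset V) (F : Finset (Sym2 V)) : Prop :=
  (↑F : Set (Sym2 V)) ⊆ G.edgeSet ∧ (∀ e ∈ F, ∀ v ∈ e, v ∈ S) ∧
    (SimpleGraph.fromEdgeSet (↑F : Set (Sym2 V))).IsAcyclic

/-- The polynomial `p_{G[S],δ}(x) = ∑_{F forest of G[S]} (∏_{T comp. of F} w_T) x^{|F|}`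
(with weights computed in `G`). -/
noncomputable def pPolyOn (G : SimpleGraph V) (ord : Sym2 V → ℕ) (δ : ℝ) (S : Finset V) :
    Polynomial ℂ :=
  ∑ F ∈ Finset.univ.filter (fun F => IsForestOn G S F),
    Polynomial.monomial F.card (((∏ T ∈ comps F, treeWeight G ord δ T : ℝ)) : ℂ)

/-- The polynomial `p_{G,δ}`. -/
noncomputable def pPoly (G : SimpleGraph V) (ord : Sym2 V → ℕ) (δ : ℝ) : Polynomial ℂ :=
  pPolyOn G ord δ Finset.univ

/-- `T` is (the edge set of) a spanning tree of the induced subgraph `G[S]`. -/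
def IsSpanningTreeOn (G : SimpleGraph V) (S : Finset V) (T : Finset (Sym2 V)) : Prop :=
  (↑T : Set (Sym2 V)) ⊆ G.edgeSet ∧ (∀ e ∈ T, ∀ v ∈ e, v ∈ S) ∧
    (SimpleGraph.induce (↑S : Set V)
      (SimpleGraph.fromEdgeSet (↑T : Set (Sym2 V)))).IsTree

/-- The weight `w(G[S])` of the subgraph of `G` induced by `S`. -/
noncomputable def indWeight (G : SimpleGraph V) (ord : Sym2 V → ℕ) (δ : ℝ)
    (S : Finset V) : ℝ :=
  ∑ T ∈ Finset.univ.filter (fun T => IsSpanningTreeOn G S T),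
    (1/2 + δ) ^ (-(S.card : ℤ)) * (-1 : ℝ) ^ T.card * treeIntegral G ord δ S T

/-- `G` has maximum degree at most `Δ`. -/
def maxDegreeLE (G : SimpleGraph V) (Δ : ℝ) : Prop :=
  ∀ v : V, ((Finset.univ.filter (fun u => G.Adj v u)).card : ℝ) ≤ Δ

/-- The truncated relaxed independent set polytope `P_{G,δ}`. -/
def polytope (G : SimpleGraph V) (δ : ℝ) : Set (V → ℝ) :=
  {x | (∀ v, x v ∈ Set.Icc (0:ℝ) (1/2 + δ)) ∧ ∀ ⦃u v⦄, G.Adj u v → x u + x v ≤ 1}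

end VolumePaper

/-!
Among the connected edge sets inside `F`, choose one, `T`, of least weight
`∑ e ∈ T, (ord e + 1)`. Deleting an edge that lies on a cycle keeps a graph connected, so `T` is a
tree; and an edge `e ∈ F \ T` is broken, since a larger edge of `T` on the cycle of `T ∪ {e}`
could be exchanged for `e`, lowering the weight. For uniqueness, let `e` be the `ord`-least edge
in the symmetric difference of two such trees `T ≠ T'`, say `e ∈ T' \ T`. Then `e` is broken for
`T`, and its cycle in `T ∪ {e}` does not lie in the tree `T'`, so it has an edge of `T \ T'`
below `e`.
-/

namespace SimpleGraph

variable {α : Type*}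

lemma Connected.fromEdgeSet_sdiff_singleton {s : Set (Sym2 α)} {f : Sym2 α}
    (hs : (fromEdgeSet s).Connected) {u : α} {c : (fromEdgeSet s).Walk u u}
    (hc : c.IsCycle) (hf : f ∈ c.edges) : (fromEdgeSet (s \ {f})).Connected := by
  induction f using Sym2.ind with
  | _ x y =>
    rw [← deleteEdges_fromEdgeSet]
    exact hs.connected_delete_edge_of_not_isBridge fun hb => hb.notMem_edges_of_isCycle hc hf

lemma Connected.exists_isCycle_fromEdgeSet_insert {s : Set (Sym2 α)} {e : Sym2 α}
    (hs : (fromEdgeSet s).Connected) (he : ¬e.IsDiag) (hes : e ∉ s) :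
    ∃ (u : α) (c : (fromEdgeSet (insert e s)).Walk u u), c.IsCycle ∧ e ∈ c.edges := by
  induction e using Sym2.ind with
  | _ x y =>
    refine adj_and_reachable_delete_edges_iff_exists_cycle.mp ⟨?_, ?_⟩
    · simpa using he
    · rw [deleteEdges_fromEdgeSet, Set.insert_sdiff_self_of_notMem hes]
      exact hs.preconnected x y

lemma Walk.mem_of_mem_edges_fromEdgeSet {s : Set (Sym2 α)} {u v : α}
    {p : (fromEdgeSet s).Walk u v} {f : Sym2 α} (hf : f ∈ p.edges) : f ∈ s := by
  have := p.edges_subset_edgeSet hf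
  rw [edgeSet_fromEdgeSet] at this
  exact this.1

lemma IsAcyclic.exists_mem_edges_notMem_of_isCycle {G : SimpleGraph α} {t : Set (Sym2 α)}
    (ht : (fromEdgeSet t).IsAcyclic) {u : α} {c : G.Walk u u} (hc : c.IsCycle) :
    ∃ f ∈ c.edges, f ∉ t := by
  by_contra! hall
  refine ht _ (hc.transfer fun f hf => ?_)
  rw [edgeSet_fromEdgeSet]
  exact ⟨hall f hf, G.not_isDiag_of_mem_edgeSet (c.edges_subset_edgeSet hf)⟩

end SimpleGraph

namespace Finset

open scoped symmDiff

lemma eq_of_forall_mem_notMem_exists_lt {β : Type*} {A B : Finset β} (w : β → ℕ)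
    (hAB : ∀ e ∈ A, e ∉ B → ∃ f ∈ B, f ∉ A ∧ w f < w e)
    (hBA : ∀ e ∈ B, e ∉ A → ∃ f ∈ A, f ∉ B ∧ w f < w e) : A = B := by
  classical
  by_contra hne
  obtain ⟨e, he, hmin⟩ := (A ∆ B).exists_min_image w (symmDiff_nonempty.mpr hne)
  rcases mem_symmDiff.mp he with ⟨heA, heB⟩ | ⟨heB, heA⟩
  · obtain ⟨f, hfB, hfA, hlt⟩ := hAB e heA heB
    exact (hmin f (mem_symmDiff.mpr (Or.inr ⟨hfB, hfA⟩))).not_gt hlt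
  · obtain ⟨f, hfA, hfB, hlt⟩ := hBA e heB heA
    exact (hmin f (mem_symmDiff.mpr (Or.inl ⟨hfA, hfB⟩))).not_gt hlt

end Finset

namespace VolumePaper

open SimpleGraph

variable {V : Type}

-- The `+ 1` makes deleting any edge, even one with `ord e = 0`, strictly lower the weight.
def ordWeight (ord : Sym2 V → ℕ) (T : Finset (Sym2 V)) : ℕ :=
  ∑ e ∈ T, (ord e + 1)

lemma ordWeight_erase_lt {ord : Sym2 V → ℕ} {T : Finset (Sym2 V)} {f : Sym2 V} (hf : f ∈ T) :
    ordWeight ord (T.erase f) < ordWeight ord T := by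
  have := Finset.add_sum_erase T (fun x => ord x + 1) hf
  simp only [ordWeight]
  omega

lemma ordWeight_insert_erase_lt {ord : Sym2 V → ℕ} {T : Finset (Sym2 V)} {e f : Sym2 V}
    (he : e ∉ T) (hf : f ∈ T) (hlt : ord e < ord f) :
    ordWeight ord (insert e (T.erase f)) < ordWeight ord T := by
  have h₁ := Finset.sum_insert (s := T.erase f) (f := fun x => ord x + 1)
    (fun h => he (Finset.mem_of_mem_erase h))
  have h₂ := Finset.add_sum_erase T (fun x => ord x + 1) hf
  simp only [ordWeight]
  omega

structure IsMinConnectedIn (ord : Sym2 V → ℕ) (F T : Finset (Sym2 V)) : Prop where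
  subset : T ⊆ F
  connected : (fromEdgeSet (T : Set (Sym2 V))).Connected
  ordWeight_le : ∀ T' ⊆ F, (fromEdgeSet (T' : Set (Sym2 V))).Connected →
    ordWeight ord T ≤ ordWeight ord T'

lemma exists_isMinConnectedIn (ord : Sym2 V → ℕ) {F : Finset (Sym2 V)}
    (hF : (fromEdgeSet (F : Set (Sym2 V))).Connected) : ∃ T, IsMinConnectedIn ord F T := by
  classical
  obtain ⟨T, hT, hmin⟩ := (F.powerset.filter fun T : Finset (Sym2 V) =>
    (fromEdgeSet (↑T : Set (Sym2 V))).Connected).exists_min_image (ordWeight ord)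
      ⟨F, by simp [hF]⟩
  simp only [Finset.mem_filter, Finset.mem_powerset] at hT hmin
  exact ⟨T, hT.1, hT.2, fun T' hT'F hT' => hmin T' ⟨hT'F, hT'⟩⟩

namespace IsMinConnectedIn

variable {ord : Sym2 V → ℕ} {F T : Finset (Sym2 V)}

lemma isAcyclic (h : IsMinConnectedIn ord F T) : (fromEdgeSet (T : Set (Sym2 V))).IsAcyclic := by
  intro u c hc
  have hf := c.mk_start_snd_mem_edges hc.not_nil
  have hfT : s(u, c.snd) ∈ T := Walk.mem_of_mem_edges_fromEdgeSet hf
  have hle := h.ordWeight_le (T.erase _) ((Finset.erase_subset _ _).trans h.subset) (by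
    rw [Finset.coe_erase]
    exact h.connected.fromEdgeSet_sdiff_singleton hc hf)
  exact (ordWeight_erase_lt hfT).not_ge hle

lemma mem_brokenEdgesOn [Fintype V] {H : SimpleGraph V} (h : IsMinConnectedIn ord F T)
    {e : Sym2 V} (heH : e ∈ H.edgeSet) (heF : e ∈ F) (heT : e ∉ T) :
    e ∈ brokenEdgesOn H ord Finset.univ T := by
  obtain ⟨u, c, hc, hec⟩ := h.connected.exists_isCycle_fromEdgeSet_insert
    (H.not_isDiag_of_mem_edgeSet heH) (Finset.mem_coe.not.mpr heT)
  refine Finset.mem_filter.mpr ⟨Finset.mem_univ _, heH, fun _ _ => Finset.mem_univ _, heT,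
    u, c, hc, hec, fun f hf => ?_⟩
  rcases Set.mem_insert_iff.mp (Walk.mem_of_mem_edges_fromEdgeSet hf) with rfl | hfT
  · rfl
  by_contra! hlt
  have hfe : e ≠ f := ne_of_mem_of_not_mem hfT (Finset.mem_coe.not.mpr heT) |>.symm
  have hconn := (h.connected.mono (fromEdgeSet_mono (Set.subset_insert e _))
    ).fromEdgeSet_sdiff_singleton hc hf
  have hle := h.ordWeight_le (insert e (T.erase f))
    (Finset.insert_subset heF ((Finset.erase_subset _ _).trans h.subset)) (by
      rwa [Finset.coe_insert, Finset.coe_erase, Set.insert_sdiff_singleton_comm hfe])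
  exact (ordWeight_insert_erase_lt heT hfT hlt).not_ge hle

end IsMinConnectedIn

lemma exists_lt_of_mem_of_notMem [Fintype V] {H : SimpleGraph V} {ord : Sym2 V → ℕ}
    (hord : Function.Injective ord)
    {F T T' : Finset (Sym2 V)} (hcover : F ⊆ T ∪ brokenEdgesOn H ord Finset.univ T)
    (hT'F : T' ⊆ F) (hT' : (fromEdgeSet (T' : Set (Sym2 V))).IsAcyclic)
    {e : Sym2 V} (heT' : e ∈ T') (heT : e ∉ T) : ∃ f ∈ T, f ∉ T' ∧ ord f < ord e := by
  have hbroken := (Finset.mem_union.mp (hcover (hT'F heT'))).resolve_left heT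
  obtain ⟨-, -, -, u, c, hc, -, hmax⟩ := (Finset.mem_filter.mp hbroken).2
  obtain ⟨f, hfc, hfT'⟩ := hT'.exists_mem_edges_notMem_of_isCycle hc
  have hfe : f ≠ e := ne_of_mem_of_not_mem heT' hfT' |>.symm
  have hfT : f ∈ T :=
    (Set.mem_insert_iff.mp (Walk.mem_of_mem_edges_fromEdgeSet hfc)).resolve_left hfe
  exact ⟨f, hfT, hfT', (hmax f hfc).lt_of_ne (hord.ne hfe)⟩

theorem statement3_general (V : Type) [Fintype V] (H : SimpleGraph V)
    (ord : Sym2 V → ℕ) (hord : Function.Injective ord)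
    (F : Finset (Sym2 V)) (hFE : (↑F : Set (Sym2 V)) ⊆ H.edgeSet)
    (hFconn : (SimpleGraph.fromEdgeSet (↑F : Set (Sym2 V))).Connected) :
    ∃! T : Finset (Sym2 V),
      (↑T : Set (Sym2 V)) ⊆ H.edgeSet ∧
      (SimpleGraph.fromEdgeSet (↑T : Set (Sym2 V))).IsTree ∧
      T ⊆ F ∧ F ⊆ T ∪ brokenEdgesOn H ord Finset.univ T := by
  obtain ⟨T, hT⟩ := exists_isMinConnectedIn ord hFconn
  have hcover : F ⊆ T ∪ brokenEdgesOn H ord Finset.univ T := fun e heF => by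
    by_cases heT : e ∈ T
    · exact Finset.mem_union_left _ heT
    · exact Finset.mem_union_right _ (hT.mem_brokenEdgesOn (hFE heF) heF heT)
  have hTH : (↑T : Set (Sym2 V)) ⊆ H.edgeSet := fun e he => hFE (hT.subset he)
  refine ⟨T, ⟨hTH, ⟨hT.connected, hT.isAcyclic⟩, hT.subset, hcover⟩, ?_⟩
  rintro T' ⟨-, hT', hT'F, hcover'⟩
  exact Finset.eq_of_forall_mem_notMem_exists_lt ord
    (fun _ => exists_lt_of_mem_of_notMem hord hcover hT'F hT'.isAcyclic)
    (fun _ => exists_lt_of_mem_of_notMem hord hcover' hT.subset hT.isAcyclic)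

/-- Let `H` be a connected finite simple graph with a fixed total edge
order. Every edge set `F ⊆ E(H)` spanning a connected graph on all of `V` contains
exactly one spanning tree `T` with `T ⊆ F ⊆ T ∪ E_T`. -/
theorem statement3 (V : Type) [Fintype V] (H : SimpleGraph V) (hconn : H.Connected)
    (ord : Sym2 V → ℕ) (hord : Function.Injective ord)
    (F : Finset (Sym2 V)) (hFE : (↑F : Set (Sym2 V)) ⊆ H.edgeSet)
    (hFconn : (SimpleGraph.fromEdgeSet (↑F : Set (Sym2 V))).Connected) :
    ∃! T : Finset (Sym2 V),
      (↑T : Set (Sym2 V)) ⊆ H.edgeSet ∧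
      (SimpleGraph.fromEdgeSet (↑T : Set (Sym2 V))).IsTree ∧
      T ⊆ F ∧ F ⊆ T ∪ brokenEdgesOn H ord Finset.univ T :=
  statement3_general V H ord hord F hFE hFconn

end VolumePaper
end

section
/- Let H=(V,E) be a finite simple graph with a fixed total order on E, and let (f_e)_{e∈E} be arbitrary real numbers. Then Σ over subsets A ⊆ E with (V,A) connected of (−1)^{|A|} ∏_{e∈A} f_e equals Σ over spanning trees T ⊆ E of (−1)^{|T|} ∏_{e∈T} f_e · ∏_{e∈E_T} (1 − f_e). -/
/-!
Run Kruskal's algorithm on a connected edge set `A`, processing edges in increasing order: it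
keeps exactly the edges of `A` whose endpoints are not yet joined by smaller edges of `A`, and
returns a spanning tree `T`. The discarded edges are broken for `T` (a path of smaller edges
of `A` can be rerouted through `T`), and conversely adding to a spanning tree `T` any set `B`
of its broken edges does not change the output, since every edge of `B` is the largest edge on
a cycle of `T ∪ B`. Hence `A ↦ (T, A \ T)` is a bijection onto the pairs `(T, B ⊆ E_T)`, and
expanding `∏_{e ∈ E_T} (1 - f_e) = ∑_{B ⊆ E_T} (-1)^{|B|} ∏_{e ∈ B} f_e` matches the two sides
term by term.
-/

open MeasureTheory

attribute [local instance] Classical.propDecidable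

namespace VolumePaper

open SimpleGraph Finset

theorem reachable_le_reachable_of_adj_le {V : Type*} {G G' : SimpleGraph V}
    (h : G.Adj ≤ G'.Reachable) : G.Reachable ≤ G'.Reachable := by
  rw [reachable_eq_reflTransGen] at h ⊢
  rw [reachable_eq_reflTransGen]
  exact Relation.reflTransGen_closed h

theorem prod_one_sub_eq_sum_powerset {ι R : Type*} [CommRing R] (s : Finset ι) (f : ι → R) :
    ∏ i ∈ s, (1 - f i) = ∑ t ∈ s.powerset, (-1) ^ #t * ∏ i ∈ t, f i := by
  simp only [sub_eq_add_neg, prod_one_add, prod_neg]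

section Kruskal

variable {V : Type*} (ord : Sym2 V → ℕ)

def belowGraph (S : Set (Sym2 V)) (n : ℕ) : SimpleGraph V :=
  fromEdgeSet {e ∈ S | ord e < n}

def IsBroken (S : Set (Sym2 V)) (e : Sym2 V) : Prop :=
  ∃ x y, e = s(x, y) ∧ x ≠ y ∧ (belowGraph ord S (ord e)).Reachable x y

/-- The forest chosen by Kruskal's algorithm when the edges of `A` are processed in the
order given by `ord`. -/
noncomputable def kruskalForest (A : Finset (Sym2 V)) : Finset (Sym2 V) :=
  A.filter fun e => ¬ IsBroken ord A e

variable {ord}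

theorem belowGraph_mono {S T : Set (Sym2 V)} {m n : ℕ} (hST : S ⊆ T) (hmn : m ≤ n) :
    belowGraph ord S m ≤ belowGraph ord T n :=
  fromEdgeSet_mono fun _ he => ⟨hST he.1, he.2.trans_le hmn⟩

theorem belowGraph_insert_self (S : Set (Sym2 V)) (e : Sym2 V) :
    belowGraph ord (insert e S) (ord e) = belowGraph ord S (ord e) := by
  simp only [belowGraph, Set.mem_insert_iff, or_and_right]
  congr 2
  ext e'
  grind

theorem deleteEdges_fromEdgeSet_insert_eq_belowGraph (S : Set (Sym2 V)) (e : Sym2 V) :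
    (fromEdgeSet (insert e {e' ∈ S | ord e' < ord e})).deleteEdges {e} =
      belowGraph ord S (ord e) := by
  rw [deleteEdges_fromEdgeSet, Set.insert_sdiff_self_of_notMem (by simp)]
  rfl

theorem isBroken_mk_iff {S : Set (Sym2 V)} {x y : V} :
    IsBroken ord S s(x, y) ↔ x ≠ y ∧ (belowGraph ord S (ord s(x, y))).Reachable x y := by
  refine ⟨?_, fun ⟨hxy, h⟩ => ⟨x, y, rfl, hxy, h⟩⟩
  rintro ⟨a, b, hab, hne, h⟩
  rcases Sym2.eq_iff.1 hab with ⟨rfl, rfl⟩ | ⟨rfl, rfl⟩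
  · exact ⟨hne, h⟩
  · exact ⟨hne.symm, h.symm⟩

theorem IsBroken.mono {S T : Set (Sym2 V)} {e : Sym2 V} (hST : S ⊆ T) (h : IsBroken ord S e) :
    IsBroken ord T e :=
  let ⟨x, y, he, hxy, hr⟩ := h
  ⟨x, y, he, hxy, hr.mono (belowGraph_mono hST le_rfl)⟩

theorem reachable_belowGraph_le {S T : Set (Sym2 V)} {n : ℕ}
    (h : ∀ e ∈ S, ord e < n → e ∈ T ∨ IsBroken ord T e) :
    (belowGraph ord S n).Reachable ≤ (belowGraph ord T n).Reachable := by
  refine reachable_le_reachable_of_adj_le fun x y hxy => ?_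
  obtain ⟨⟨he, hlt⟩, hne⟩ := hxy
  rcases h _ he hlt with hT | hb
  · exact Adj.reachable ⟨⟨hT, hlt⟩, hne⟩
  · exact (isBroken_mk_iff.1 hb).2.mono (belowGraph_mono subset_rfl hlt.le)

theorem reachable_belowGraph_kruskalForest (A : Finset (Sym2 V)) (n : ℕ) :
    (belowGraph ord A n).Reachable ≤ (belowGraph ord (kruskalForest ord A) n).Reachable := by
  induction n using Nat.strong_induction_on with
  | _ n ih =>
  refine reachable_belowGraph_le fun e he hlt => ?_
  by_cases hb : IsBroken ord A e
  · obtain ⟨x, y, rfl, hxy, h⟩ := hb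
    exact Or.inr ⟨x, y, rfl, hxy, ih _ hlt _ _ h⟩
  · exact Or.inl (mem_filter.2 ⟨he, hb⟩)

theorem IsBroken.kruskalForest {A : Finset (Sym2 V)} {e : Sym2 V} (h : IsBroken ord A e) :
    IsBroken ord (kruskalForest ord A) e :=
  let ⟨x, y, he, hxy, hr⟩ := h
  ⟨x, y, he, hxy, reachable_belowGraph_kruskalForest A _ _ _ hr⟩

theorem connected_kruskalForest {A : Finset (Sym2 V)}
    (hA : (fromEdgeSet (A : Set (Sym2 V))).Connected) :
    (fromEdgeSet (kruskalForest ord A : Set (Sym2 V))).Connected := by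
  have : Nonempty V := hA.nonempty
  refine ⟨fun u v =>
    reachable_le_reachable_of_adj_le (fun x y hxy => ?_) _ _ (hA.preconnected u v)⟩
  have hadj : (belowGraph ord A (ord s(x, y) + 1)).Adj x y :=
    ⟨⟨hxy.1, Nat.lt_succ_self _⟩, hxy.2⟩
  exact (reachable_belowGraph_kruskalForest A _ _ _ hadj.reachable).mono
    (fromEdgeSet_mono (Set.sep_subset _ _))

theorem reachable_belowGraph_of_isCycle (hord : Function.Injective ord) {S : Set (Sym2 V)}
    {u x y : V} {c : (fromEdgeSet S).Walk u u} (hc : c.IsCycle) (hxy : s(x, y) ∈ c.edges)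
    (hmax : ∀ e ∈ c.edges, ord e ≤ ord s(x, y)) :
    (belowGraph ord S (ord s(x, y))).Reachable x y := by
  set G := fromEdgeSet (insert s(x, y) {e ∈ S | ord e < ord s(x, y)})
  have hcG : ∀ e ∈ c.edges, e ∈ G.edgeSet := by
    intro e he
    obtain ⟨heS, hdiag⟩ := (edgeSet_fromEdgeSet S).subset (c.edges_subset_edgeSet he)
    refine (edgeSet_fromEdgeSet _).superset ⟨?_, hdiag⟩
    rcases (hmax e he).eq_or_lt with h | h
    exacts [Or.inl (hord h), Or.inr ⟨heS, h⟩]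
  have := adj_and_reachable_delete_edges_iff_exists_cycle.2
    ⟨u, c.transfer G hcG, hc.transfer hcG, by rwa [Walk.edges_transfer]⟩
  rw [← deleteEdges_fromEdgeSet_insert_eq_belowGraph]
  exact this.2

theorem exists_isCycle_of_reachable_belowGraph {T : Set (Sym2 V)} {x y : V} (hxy : x ≠ y)
    (h : (belowGraph ord T (ord s(x, y))).Reachable x y) :
    ∃ (u : V) (c : (fromEdgeSet (insert s(x, y) T)).Walk u u),
      c.IsCycle ∧ s(x, y) ∈ c.edges ∧ ∀ e ∈ c.edges, ord e ≤ ord s(x, y) := by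
  set G := fromEdgeSet (insert s(x, y) {e ∈ T | ord e < ord s(x, y)})
  have hle : G ≤ fromEdgeSet (insert s(x, y) T) :=
    fromEdgeSet_mono (Set.insert_subset_insert (Set.sep_subset _ _))
  obtain ⟨u, c, hc, he⟩ :=
    (adj_and_reachable_delete_edges_iff_exists_cycle (G := G) (v := x) (w := y)).1
    ⟨by simp [G, hxy], by rwa [deleteEdges_fromEdgeSet_insert_eq_belowGraph]⟩
  refine ⟨u, c.mapLe hle, hc.mapLe hle, by rwa [Walk.edges_mapLe_eq_edges], fun e he' => ?_⟩
  rw [Walk.edges_mapLe_eq_edges] at he'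
  rcases ((edgeSet_fromEdgeSet _).subset (c.edges_subset_edgeSet he')).1 with rfl | h
  exacts [le_rfl, h.2.le]

theorem isAcyclic_kruskalForest (hord : Function.Injective ord) (A : Finset (Sym2 V)) :
    (fromEdgeSet (kruskalForest ord A : Set (Sym2 V))).IsAcyclic := by
  intro u c hc
  obtain ⟨e, he, hmax⟩ := c.edges.toFinset.exists_max_image ord (by simp [hc.not_nil])
  rw [List.mem_toFinset] at he
  obtain ⟨heF, hdiag⟩ := (edgeSet_fromEdgeSet _).subset (c.edges_subset_edgeSet he)
  cases e with | h x y =>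
  have hr := reachable_belowGraph_of_isCycle hord hc he
    fun e' he' => hmax e' (List.mem_toFinset.2 he')
  exact (mem_filter.1 heF).2 (isBroken_mk_iff.2
    ⟨fun h => hdiag (by simp [h]), hr.mono (belowGraph_mono (filter_subset _ _) le_rfl)⟩)

theorem kruskalForest_union_eq {T B : Finset (Sym2 V)}
    (hT : (fromEdgeSet (T : Set (Sym2 V))).IsAcyclic) (hB : ∀ e ∈ B, IsBroken ord T e) :
    kruskalForest ord (T ∪ B) = T := by
  ext e
  simp only [kruskalForest, mem_filter, mem_union]
  refine ⟨fun ⟨he, hnb⟩ => he.resolve_right fun heB => hnb ((hB e heB).mono ?_),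
    fun he => ⟨Or.inl he, fun hb => ?_⟩⟩
  · simp
  obtain ⟨x, y, rfl, hxy, h⟩ := hb
  have hT' : (belowGraph ord T (ord s(x, y))).Reachable x y := by
    refine reachable_belowGraph_le (fun e' he' _ => ?_) _ _ h
    rcases mem_union.1 (mem_coe.1 he') with h | h
    exacts [Or.inl h, Or.inr (hB e' h)]
  refine isAcyclic_iff_forall_adj_isBridge.1 hT (by simp [he, hxy]) (hT'.mono ?_)
  rw [deleteEdges_fromEdgeSet]
  exact fromEdgeSet_mono fun e' ⟨he'T, hlt⟩ => ⟨he'T, fun h => hlt.ne (congrArg ord h)⟩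

end Kruskal

section BrokenEdges

variable {V : Type} [Fintype V] {G : SimpleGraph V} {ord : Sym2 V → ℕ}

theorem disjoint_brokenEdgesOn (S : Finset V) (T : Finset (Sym2 V)) :
    Disjoint T (brokenEdgesOn G ord S T) :=
  disjoint_right.2 fun _ he => (mem_filter.1 he).2.2.2.1

theorem mem_brokenEdgesOn_univ_iff (hord : Function.Injective ord) {T : Finset (Sym2 V)}
    {e : Sym2 V} :
    e ∈ brokenEdgesOn G ord univ T ↔ e ∈ G.edgeSet ∧ e ∉ T ∧ IsBroken ord T e := by
  cases e with | h x y =>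
  simp only [brokenEdgesOn, mem_filter, mem_univ, true_and, implies_true]
  refine and_congr_right fun hG => and_congr_right fun _ => ?_
  have hxy : x ≠ y := G.ne_of_adj hG
  rw [isBroken_mk_iff]
  constructor
  · rintro ⟨u, c, hc, he, hmax⟩
    exact ⟨hxy, belowGraph_insert_self (ord := ord) (T : Set (Sym2 V)) s(x, y) ▸
      reachable_belowGraph_of_isCycle hord hc he hmax⟩
  · exact fun ⟨_, h⟩ => exists_isCycle_of_reachable_belowGraph hxy h

theorem sum_connected_eq_sum_isTree_sum_powerset_brokenEdgesOn {M : Type*} [AddCommMonoid M]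
    (hord : Function.Injective ord) (g : Finset (Sym2 V) → M) :
    ∑ A ∈ univ.filter (fun A : Finset (Sym2 V) =>
        (A : Set (Sym2 V)) ⊆ G.edgeSet ∧ (fromEdgeSet (A : Set (Sym2 V))).Connected), g A
    = ∑ T ∈ univ.filter (fun T : Finset (Sym2 V) =>
        (T : Set (Sym2 V)) ⊆ G.edgeSet ∧ (fromEdgeSet (T : Set (Sym2 V))).IsTree),
      ∑ B ∈ (brokenEdgesOn G ord univ T).powerset, g (T ∪ B) := by
  have hsplit (A : Finset (Sym2 V)) : kruskalForest ord A ∪ A \ kruskalForest ord A = A :=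
    union_sdiff_of_subset (filter_subset _ _)
  rw [sum_sigma']
  refine sum_nbij' (fun A => ⟨kruskalForest ord A, A \ kruskalForest ord A⟩)
    (fun p => p.1 ∪ p.2) ?_ ?_ ?_ ?_ ?_
  · simp only [mem_filter, mem_univ, true_and, mem_sigma, mem_powerset]
    rintro A ⟨hAG, hA⟩
    refine ⟨⟨(coe_subset.2 (filter_subset _ _)).trans hAG, connected_kruskalForest hA,
      isAcyclic_kruskalForest hord A⟩, fun e he => ?_⟩
    obtain ⟨heA, heF⟩ := mem_sdiff.1 he
    have hb : IsBroken ord A e := by simpa [kruskalForest, heA] using heF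
    exact (mem_brokenEdgesOn_univ_iff hord).2 ⟨hAG heA, heF, hb.kruskalForest⟩
  · simp only [mem_filter, mem_univ, true_and, mem_sigma, mem_powerset]
    rintro ⟨T, B⟩ ⟨⟨hTG, hT⟩, hB⟩
    refine ⟨?_, hT.connected.mono (fromEdgeSet_mono (by simp))⟩
    rw [coe_union, Set.union_subset_iff]
    exact ⟨hTG, fun e he => ((mem_brokenEdgesOn_univ_iff hord).1 (hB he)).1⟩
  · exact fun A _ => hsplit A
  · simp only [mem_filter, mem_univ, true_and, mem_sigma, mem_powerset]
    rintro ⟨T, B⟩ ⟨⟨-, hT⟩, hB⟩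
    have hF : kruskalForest ord (T ∪ B) = T := kruskalForest_union_eq hT.isAcyclic
      fun e he => ((mem_brokenEdgesOn_univ_iff hord).1 (hB he)).2.2
    simp only [hF, union_sdiff_cancel_left ((disjoint_brokenEdgesOn univ T).mono_right hB)]
  · exact fun A _ => congrArg g (hsplit A).symm

end BrokenEdges

/-- (Penrose identity) For a finite simple graph `H` with a fixed total
edge order and any reals `(f_e)`, the sum over connected spanning edge sets `A ⊆ E` of
`(−1)^{|A|} ∏_{e∈A} f_e` equals the sum over spanning trees `T` of
`(−1)^{|T|} ∏_{e∈T} f_e ∏_{e∈E_T} (1 − f_e)`. -/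
theorem statement4 (V : Type) [Fintype V] (H : SimpleGraph V) (ord : Sym2 V → ℕ)
    (hord : Function.Injective ord) (f : Sym2 V → ℝ) :
    ∑ A ∈ Finset.univ.filter (fun A : Finset (Sym2 V) =>
        (↑A : Set (Sym2 V)) ⊆ H.edgeSet ∧
        (SimpleGraph.fromEdgeSet (↑A : Set (Sym2 V))).Connected),
      (-1 : ℝ) ^ A.card * ∏ e ∈ A, f e
    = ∑ T ∈ Finset.univ.filter (fun T : Finset (Sym2 V) =>
        (↑T : Set (Sym2 V)) ⊆ H.edgeSet ∧
        (SimpleGraph.fromEdgeSet (↑T : Set (Sym2 V))).IsTree),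
      (-1 : ℝ) ^ T.card * (∏ e ∈ T, f e) *
        ∏ e ∈ brokenEdgesOn H ord Finset.univ T, (1 - f e) := by
  rw [sum_connected_eq_sum_isTree_sum_powerset_brokenEdgesOn hord]
  refine sum_congr rfl fun T _ => ?_
  rw [prod_one_sub_eq_sum_powerset, mul_sum]
  refine sum_congr rfl fun B hB => ?_
  have hTB : Disjoint T B := (disjoint_brokenEdgesOn univ T).mono_right (mem_powerset.1 hB)
  rw [card_union_of_disjoint hTB, prod_union hTB, pow_add]
  ring

end VolumePaper
end

section
/- Let G=(V,E) be a finite simple graph on n vertices with a fixed total order on E and let δ ∈ (0,1/2). For every complex number x, Σ_{k≥0} Σ_{P ∈ π_{n−k}(V)} ∏_{S∈P} w(G[S]) · x^k = Σ over forests F ⊆ E of x^{|F|} ∏_T w_T, where the last product is over the connected components T of F having at least one edge; here π_{m}(V) denotes the collection of partitions of V into m nonempty sets. -/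
/-!
Expanding every `w(G[S])` as a sum over spanning trees of `G[S]` turns the left-hand side into a
sum over partitions `P` of `V` together with a spanning tree of each block. Taking the union of
the trees is a bijection onto the forests of `G`; its inverse sends a forest to its partition into
connected components and the edges inside each component. A partition into `n - k` blocks gives a
forest with `k` edges, a block spanned by a nonempty tree `T` has vertex set `V(T)`, and a
singleton block has weight `1`, so the summands match.
-/

open MeasureTheory

attribute [local instance] Classical.propDecidable

namespace SimpleGraph

variable {V : Type*}

lemma reachable_fromEdgeSet_of_mem {s : Set (Sym2 V)} {e : Sym2 V} (he : e ∈ s) {u w : V}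
    (hu : u ∈ e) (hw : w ∈ e) : (fromEdgeSet s).Reachable u w := by
  by_cases huw : u = w
  · exact huw ▸ Reachable.refl u
  · rw [(Sym2.mem_and_mem_iff huw).1 ⟨hu, hw⟩] at he
    exact ((fromEdgeSet_adj _).2 ⟨he, huw⟩).reachable

lemma Reachable.mem_of_adj_closed {H : SimpleGraph V} {s : Set V}
    (hs : ∀ a b, H.Adj a b → a ∈ s → b ∈ s) {u w : V} (h : H.Reachable u w) (hu : u ∈ s) :
    w ∈ s := by
  rw [reachable_iff_reflTransGen] at h
  induction h with
  | refl => exact hu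
  | tail _ hab ih => exact hs _ _ hab ih

lemma isAcyclic_of_forall_isAcyclic_induce_supp {H : SimpleGraph V}
    (h : ∀ C : H.ConnectedComponent, (H.induce C.supp).IsAcyclic) : H.IsAcyclic := by
  intro v c hc
  have hsupp : ∀ x ∈ c.support, x ∈ (H.connectedComponentMk v).supp := fun x hx =>
    ConnectedComponent.sound (c.takeUntil x hx).reachable.symm
  refine h _ (c.induce _ hsupp) ?_
  rwa [← Walk.isCycle_map_iff_of_injective (f := (Embedding.induce _).toHom) Subtype.val_injective,
    Walk.map_induce]

end SimpleGraph

namespace VolumePaper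

variable {V : Type}

section

open SimpleGraph

noncomputable def edgesIn (F : Finset (Sym2 V)) (S : Finset V) : Finset (Sym2 V) :=
  F.filter fun e => ∀ v ∈ e, v ∈ S

lemma mem_edgesIn {F : Finset (Sym2 V)} {S : Finset V} {e : Sym2 V} :
    e ∈ edgesIn F S ↔ e ∈ F ∧ ∀ v ∈ e, v ∈ S :=
  Finset.mem_filter

lemma induce_fromEdgeSet_edgesIn (F : Finset (Sym2 V)) (S : Finset V) :
    (fromEdgeSet (edgesIn F S : Set (Sym2 V))).induce (S : Set V)
      = (fromEdgeSet (F : Set (Sym2 V))).induce (S : Set V) := by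
  ext ⟨a, ha⟩ ⟨b, hb⟩
  simp only [Finset.mem_coe] at ha hb
  simp [edgesIn, ha, hb]

namespace IsSpanningTreeOn

variable {G : SimpleGraph V} {S : Finset V} {T : Finset (Sym2 V)}

lemma reachable (h : IsSpanningTreeOn G S T) {u w : V} (hu : u ∈ S) (hw : w ∈ S) :
    (fromEdgeSet (T : Set (Sym2 V))).Reachable u w := by
  simpa using (h.2.2.connected.preconnected ⟨u, hu⟩ ⟨w, hw⟩).map (Embedding.induce _).toHom

lemma exists_adj_of_mem (h : IsSpanningTreeOn G S T) {e : Sym2 V} (he : e ∈ T) :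
    ∃ a b, G.Adj a b ∧ a ∈ S ∧ b ∈ S ∧ e = s(a, b) := by
  induction e using Sym2.ind with
  | _ a b => exact ⟨a, b, h.1 he, h.2.1 _ he a (by simp), h.2.1 _ he b (by simp), rfl⟩

lemma card_add_one (h : IsSpanningTreeOn G S T) : T.card + 1 = S.card := by
  set H := (fromEdgeSet (T : Set (Sym2 V))).induce (S : Set V)
  have hH : H.edgeFinset.card = T.card := by
    refine Finset.card_nbij (Sym2.map Subtype.val) ?_
      (fun e _ e' _ he => Sym2.map.injective Subtype.val_injective he) ?_
    · intro e he
      induction e using Sym2.ind with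
      | _ a b => exact (by simpa [H] using he : _ ∧ _).1
    · intro e he
      obtain ⟨a, b, hab, ha, hb, rfl⟩ := h.exists_adj_of_mem he
      exact ⟨s(⟨a, ha⟩, ⟨b, hb⟩), by simpa [H] using ⟨he, hab.ne⟩, rfl⟩
  rw [← hH]
  simpa using h.2.2.card_edgeFinset

end IsSpanningTreeOn

noncomputable def treeUnion (P : Finset (Finset V)) (t : ∀ S ∈ P, Finset (Sym2 V)) :
    Finset (Sym2 V) :=
  P.attach.biUnion fun S => t S.1 S.2

section TreeUnion

variable {P : Finset (Finset V)} {t : ∀ S ∈ P, Finset (Sym2 V)}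

lemma mem_treeUnion {e : Sym2 V} : e ∈ treeUnion P t ↔ ∃ S, ∃ hS : S ∈ P, e ∈ t S hS := by
  simp [treeUnion]

lemma subset_treeUnion {S : Finset V} (hS : S ∈ P) : t S hS ⊆ treeUnion P t :=
  fun _ he => mem_treeUnion.2 ⟨S, hS, he⟩

end TreeUnion

variable [Fintype V]

def IsPartition (P : Finset (Finset V)) : Prop :=
  (∀ S ∈ P, S.Nonempty) ∧ (∀ S ∈ P, ∀ S' ∈ P, S ≠ S' → Disjoint S S') ∧ P.sup id = Finset.univ

namespace IsPartition

variable {P : Finset (Finset V)}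

lemma exists_mem (hP : IsPartition P) (v : V) : ∃ S ∈ P, v ∈ S := by
  simpa using Finset.mem_sup.1 (hP.2.2 ▸ Finset.mem_univ v)

lemma eq_of_mem_of_mem (hP : IsPartition P) {S S' : Finset V} (hS : S ∈ P) (hS' : S' ∈ P)
    {v : V} (hv : v ∈ S) (hv' : v ∈ S') : S = S' :=
  by_contra fun hne => Finset.disjoint_left.1 (hP.2.1 S hS S' hS' hne) hv hv'

lemma sum_card (hP : IsPartition P) : ∑ S ∈ P, S.card = Fintype.card V := by
  rw [← Finset.card_biUnion hP.2.1, ← Finset.sup_eq_biUnion]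
  exact (congrArg Finset.card hP.2.2).trans Finset.card_univ

lemma card_le (hP : IsPartition P) : P.card ≤ Fintype.card V := by
  rw [← hP.sum_card, Finset.card_eq_sum_ones]
  exact Finset.sum_le_sum fun S hS => (hP.1 S hS).card_pos

end IsPartition

noncomputable def component (F : Finset (Sym2 V)) (v : V) : Finset V :=
  Finset.univ.filter fun u => (fromEdgeSet (F : Set (Sym2 V))).Reachable v u

noncomputable def componentPartition (F : Finset (Sym2 V)) : Finset (Finset V) :=
  Finset.univ.image (component F)

section Components

variable {F : Finset (Sym2 V)}

@[simp] lemma mem_component {u v : V} :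
    u ∈ component F v ↔ (fromEdgeSet (F : Set (Sym2 V))).Reachable v u := by
  simp [component]

lemma component_eq_of_mem {u v : V} (h : u ∈ component F v) : component F u = component F v := by
  ext w
  simp only [mem_component] at h ⊢
  exact ⟨h.trans, h.symm.trans⟩

lemma coe_component (v : V) :
    (component F v : Set V) = ((fromEdgeSet (F : Set (Sym2 V))).connectedComponentMk v).supp := by
  ext u
  simp [ConnectedComponent.mem_supp_iff, ConnectedComponent.eq, reachable_comm]

lemma mem_componentPartition {S : Finset V} :
    S ∈ componentPartition F ↔ ∃ v, component F v = S := by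
  simp [componentPartition]

lemma isPartition_componentPartition (F : Finset (Sym2 V)) :
    IsPartition (componentPartition F) := by
  refine ⟨?_, ?_, ?_⟩
  · rintro _ hS
    obtain ⟨v, rfl⟩ := mem_componentPartition.1 hS
    exact ⟨v, mem_component.2 (Reachable.refl v)⟩
  · rintro _ hS _ hS' hne
    obtain ⟨v, rfl⟩ := mem_componentPartition.1 hS
    obtain ⟨v', rfl⟩ := mem_componentPartition.1 hS'
    refine Finset.disjoint_left.2 fun u hu hu' => hne ?_
    rw [← component_eq_of_mem hu, component_eq_of_mem hu']
  · refine Finset.eq_univ_of_forall fun v => Finset.mem_sup.2 ⟨component F v, ?_, ?_⟩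
    · exact mem_componentPartition.2 ⟨v, rfl⟩
    · exact mem_component.2 (Reachable.refl v)

lemma mem_edgesIn_component {e : Sym2 V} (he : e ∈ F) {v : V} (hv : v ∈ e) :
    e ∈ edgesIn F (component F v) :=
  mem_edgesIn.2 ⟨he, fun _ hw => mem_component.2 (reachable_fromEdgeSet_of_mem he hv hw)⟩

lemma filter_reachable_eq_edgesIn {e : Sym2 V} (he : e ∈ F) {v : V} (hv : v ∈ e) :
    F.filter (fun e' => ∃ u ∈ e, ∃ w ∈ e', (fromEdgeSet (F : Set (Sym2 V))).Reachable u w)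
      = edgesIn F (component F v) := by
  ext e'
  simp only [Finset.mem_filter, mem_edgesIn, mem_component]
  refine and_congr_right fun he' => ⟨fun ⟨u, hu, w, hw, huw⟩ y hy => ?_, fun h => ?_⟩
  · exact (reachable_fromEdgeSet_of_mem he hv hu).trans
      (huw.trans (reachable_fromEdgeSet_of_mem he' hw hy))
  · exact ⟨v, hv, _, Sym2.out_fst_mem e', h _ (Sym2.out_fst_mem e')⟩

lemma comps_eq_image (F : Finset (Sym2 V)) :
    comps F = {S ∈ componentPartition F | (edgesIn F S).Nonempty}.image (edgesIn F) := by
  ext T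
  simp only [comps, Finset.mem_image, Finset.mem_filter, mem_componentPartition]
  constructor
  · rintro ⟨e, he, rfl⟩
    rw [filter_reachable_eq_edgesIn he (Sym2.out_fst_mem e)]
    exact ⟨_, ⟨⟨_, rfl⟩, e, mem_edgesIn_component he (Sym2.out_fst_mem e)⟩, rfl⟩
  · rintro ⟨_, ⟨⟨v, rfl⟩, e, he⟩, rfl⟩
    obtain ⟨heF, hev⟩ := mem_edgesIn.1 he
    refine ⟨e, heF, ?_⟩
    rw [filter_reachable_eq_edgesIn heF (Sym2.out_fst_mem e),
      component_eq_of_mem (hev _ (Sym2.out_fst_mem e))]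

end Components

lemma IsSpanningTreeOn.verts_eq {G : SimpleGraph V} {S : Finset V} {T : Finset (Sym2 V)}
    (h : IsSpanningTreeOn G S T) (hT : T.Nonempty) : verts T = S := by
  ext v
  simp only [verts, Finset.mem_filter, Finset.mem_univ, true_and]
  refine ⟨fun ⟨e, he, hv⟩ => h.2.1 e he v hv, fun hv => ?_⟩
  have : Nontrivial (S : Set V) := by
    refine Set.nontrivial_coe_sort.2 (Finset.one_lt_card_iff_nontrivial.1 ?_)
    have := h.card_add_one
    have := hT.card_pos
    omega
  obtain ⟨w, hvw⟩ : (⟨v, hv⟩ : (S : Set V)) ∈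
      ((fromEdgeSet (T : Set (Sym2 V))).induce (S : Set V)).support := by
    rw [h.2.2.connected.preconnected.support_eq_univ]; trivial
  exact ⟨_, ((fromEdgeSet_adj _).1 hvw).1, Sym2.mem_mk_left _ _⟩

section TreeUnion

variable {G : SimpleGraph V} {P : Finset (Finset V)} {t : ∀ S ∈ P, Finset (Sym2 V)}
  (hP : IsPartition P) (ht : ∀ S hS, IsSpanningTreeOn G S (t S hS))

include hP ht

lemma mem_of_mem_treeUnion {e : Sym2 V} (he : e ∈ treeUnion P t) {S : Finset V} (hS : S ∈ P)
    {v : V} (hv : v ∈ e) (hvS : v ∈ S) : e ∈ t S hS := by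
  obtain ⟨S', hS', he'⟩ := mem_treeUnion.1 he
  obtain rfl := hP.eq_of_mem_of_mem hS hS' hvS ((ht S' hS').2.1 e he' v hv)
  exact he'

lemma edgesIn_treeUnion {S : Finset V} (hS : S ∈ P) : edgesIn (treeUnion P t) S = t S hS := by
  ext e
  refine ⟨fun he => ?_, fun he => mem_edgesIn.2 ⟨subset_treeUnion hS he, (ht S hS).2.1 e he⟩⟩
  obtain ⟨heF, heS⟩ := mem_edgesIn.1 he
  exact mem_of_mem_treeUnion hP ht heF hS (Sym2.out_fst_mem e) (heS _ (Sym2.out_fst_mem e))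

lemma component_treeUnion {S : Finset V} (hS : S ∈ P) {v : V} (hv : v ∈ S) :
    component (treeUnion P t) v = S := by
  ext u
  rw [mem_component]
  refine ⟨fun h => Reachable.mem_of_adj_closed (s := (S : Set V)) ?_ h hv,
    fun hu => ((ht S hS).reachable hv hu).mono (fromEdgeSet_mono (subset_treeUnion hS))⟩
  intro a b hab ha
  have := mem_of_mem_treeUnion hP ht ((fromEdgeSet_adj _).1 hab).1 hS (Sym2.mem_mk_left a b) ha
  exact (ht S hS).2.1 _ this b (Sym2.mem_mk_right a b)

lemma componentPartition_treeUnion : componentPartition (treeUnion P t) = P := by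
  ext S
  rw [mem_componentPartition]
  constructor
  · rintro ⟨v, rfl⟩
    obtain ⟨S, hS, hv⟩ := hP.exists_mem v
    rwa [component_treeUnion hP ht hS hv]
  · intro hS
    obtain ⟨v, hv⟩ := hP.1 S hS
    exact ⟨v, component_treeUnion hP ht hS hv⟩

lemma isForestOn_treeUnion : IsForestOn G Finset.univ (treeUnion P t) := by
  refine ⟨fun e he => ?_, fun _ _ v _ => Finset.mem_univ v,
    isAcyclic_of_forall_isAcyclic_induce_supp fun C => ?_⟩
  · obtain ⟨S, hS, he⟩ := mem_treeUnion.1 he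
    exact (ht S hS).1 he
  · induction C using ConnectedComponent.ind with
    | _ v =>
      obtain ⟨S, hS, hv⟩ := hP.exists_mem v
      rw [← coe_component, component_treeUnion hP ht hS hv, ← induce_fromEdgeSet_edgesIn,
        edgesIn_treeUnion hP ht hS]
      exact (ht S hS).2.2.isAcyclic

lemma card_treeUnion_add_card : (treeUnion P t).card + P.card = Fintype.card V := by
  rw [treeUnion, Finset.card_biUnion, ← Finset.card_attach (s := P), Finset.card_eq_sum_ones,
    ← Finset.sum_add_distrib, ← hP.sum_card, ← Finset.sum_attach P]
  · exact Finset.sum_congr rfl fun S _ => (ht S.1 S.2).card_add_one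
  · rintro ⟨S, hS⟩ - ⟨S', hS'⟩ - hne
    refine Finset.disjoint_left.2 fun e he he' => hne (Subtype.ext ?_)
    have hv := (ht S' hS').2.1 e he' _ (Sym2.out_fst_mem e)
    exact hP.eq_of_mem_of_mem hS hS' ((ht S hS).2.1 e he _ (Sym2.out_fst_mem e)) hv

end TreeUnion

section Forests

variable {G : SimpleGraph V} {F : Finset (Sym2 V)}

lemma isSpanningTreeOn_edgesIn (hF : IsForestOn G Finset.univ F) {S : Finset V}
    (hS : S ∈ componentPartition F) : IsSpanningTreeOn G S (edgesIn F S) := by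
  obtain ⟨v, rfl⟩ := mem_componentPartition.1 hS
  refine ⟨fun e he => hF.1 (mem_edgesIn.1 he).1, fun e he => (mem_edgesIn.1 he).2, ?_⟩
  rw [induce_fromEdgeSet_edgesIn, coe_component]
  exact hF.2.2.isTree_connectedComponent _

lemma treeUnion_edgesIn (F : Finset (Sym2 V)) :
    treeUnion (componentPartition F) (fun S _ => edgesIn F S) = F := by
  ext e
  rw [mem_treeUnion]
  refine ⟨fun ⟨S, _, he⟩ => (mem_edgesIn.1 he).1, fun he => ?_⟩
  exact ⟨_, mem_componentPartition.2 ⟨e.out.1, rfl⟩, mem_edgesIn_component he (Sym2.out_fst_mem e)⟩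

lemma IsForestOn.card_add_card_componentPartition (hF : IsForestOn G Finset.univ F) :
    F.card + (componentPartition F).card = Fintype.card V := by
  have := card_treeUnion_add_card (isPartition_componentPartition F)
    (fun S hS => isSpanningTreeOn_edgesIn hF hS)
  rwa [treeUnion_edgesIn] at this

end Forests

section Expansion

variable {R : Type*} [CommSemiring R] (G : SimpleGraph V) (f : Finset V → Finset (Sym2 V) → R)

lemma prod_sum_spanningTrees {P : Finset (Finset V)} (hP : IsPartition P) :
    ∏ S ∈ P, ∑ T ∈ Finset.univ.filter (IsSpanningTreeOn G S), f S T
      = ∑ F ∈ Finset.univ.filter (IsForestOn G Finset.univ) with componentPartition F = P,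
          ∏ S ∈ P, f S (edgesIn F S) := by
  rw [Finset.prod_sum]
  refine Finset.sum_nbij' (fun t => treeUnion P t) (fun F S _ => edgesIn F S) ?_ ?_ ?_ ?_ ?_
  all_goals simp only [Finset.mem_pi, Finset.mem_filter, Finset.mem_univ, true_and]
  · intro t ht
    exact ⟨isForestOn_treeUnion hP ht, componentPartition_treeUnion hP ht⟩
  · rintro F ⟨hF, rfl⟩ S hS
    exact isSpanningTreeOn_edgesIn hF hS
  · intro t ht
    funext S hS
    exact edgesIn_treeUnion hP ht hS
  · rintro F ⟨-, rfl⟩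
    exact treeUnion_edgesIn F
  · intro t ht
    rw [← Finset.prod_attach P]
    exact Finset.prod_congr rfl fun S _ => by rw [edgesIn_treeUnion hP ht S.2]

lemma sum_forests_eq_sum_partitions (x : R) :
    ∑ F ∈ Finset.univ.filter (IsForestOn G Finset.univ),
        (∏ S ∈ componentPartition F, f S (edgesIn F S)) * x ^ F.card
      = ∑ P ∈ Finset.univ.filter IsPartition,
          (∏ S ∈ P, ∑ T ∈ Finset.univ.filter (IsSpanningTreeOn G S), f S T)
            * x ^ (Fintype.card V - P.card) := by
  rw [← Finset.sum_fiberwise_of_maps_to (t := Finset.univ.filter IsPartition)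
    (g := componentPartition) fun F _ => by simpa using isPartition_componentPartition F]
  refine Finset.sum_congr rfl fun P hP => ?_
  rw [prod_sum_spanningTrees G f (Finset.mem_filter.1 hP).2, Finset.sum_mul]
  refine Finset.sum_congr rfl fun F hF => ?_
  simp only [Finset.mem_filter, Finset.mem_univ, true_and] at hF
  obtain ⟨hF, rfl⟩ := hF
  rw [← hF.card_add_card_componentPartition, Nat.add_sub_cancel]

end Expansion

lemma sum_range_sum_partitions_mul_pow {R : Type*} [CommSemiring R]
    (g : Finset (Finset V) → R) (x : R) :
    ∑ k ∈ Finset.range (Fintype.card V + 1),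
      (∑ P ∈ Finset.univ.filter (fun P : Finset (Finset V) =>
          (∀ S ∈ P, S.Nonempty) ∧
          (∀ S ∈ P, ∀ S' ∈ P, S ≠ S' → Disjoint S S') ∧
          P.sup id = Finset.univ ∧ P.card + k = Fintype.card V), g P) * x ^ k
      = ∑ P ∈ Finset.univ.filter IsPartition, g P * x ^ (Fintype.card V - P.card) := by
  simp_rw [Finset.sum_mul]
  rw [Finset.sum_comm' (t' := Finset.univ.filter IsPartition)
    (s' := fun P => {Fintype.card V - P.card})]
  · simp
  · intro k P
    simp only [Finset.mem_range, Finset.mem_filter, Finset.mem_univ, true_and,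
      Finset.mem_singleton, IsPartition]
    constructor
    · rintro ⟨-, h1, h2, h3, hk⟩
      exact ⟨by omega, h1, h2, h3⟩
    · rintro ⟨hk, hP⟩
      have := IsPartition.card_le hP
      exact ⟨by omega, hP.1, hP.2.1, hP.2.2, by omega⟩

noncomputable def treeWeightOn (G : SimpleGraph V) (ord : Sym2 V → ℕ) (δ : ℝ) (S : Finset V)
    (T : Finset (Sym2 V)) : ℝ :=
  (1/2 + δ) ^ (-(S.card : ℤ)) * (-1 : ℝ) ^ T.card * treeIntegral G ord δ S T

section Weights

variable {G : SimpleGraph V} (ord : Sym2 V → ℕ) {δ : ℝ} {S : Finset V}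

lemma IsSpanningTreeOn.treeWeight_eq {T : Finset (Sym2 V)} (h : IsSpanningTreeOn G S T)
    (hT : T.Nonempty) : treeWeight G ord δ T = treeWeightOn G ord δ S T := by
  rw [treeWeight, h.verts_eq hT, treeWeightOn]

lemma brokenEdgesOn_eq_empty_of_card_le_one (hS : S.card ≤ 1) (T : Finset (Sym2 V)) :
    brokenEdgesOn G ord S T = ∅ := by
  refine Finset.eq_empty_iff_forall_notMem.2 fun e he => ?_
  obtain ⟨heG, heS, -⟩ := (Finset.mem_filter.1 he).2
  induction e using Sym2.ind with
  | _ a b => exact G.ne_of_adj heG (Finset.card_le_one.1 hS a (heS a (Sym2.mem_mk_left a b))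
      b (heS b (Sym2.mem_mk_right a b)))

lemma treeWeightOn_empty_of_card_eq_one (hδ : 0 < 1/2 + δ) (hS : S.card = 1) :
    treeWeightOn G ord δ S ∅ = 1 := by
  have hvol : treeIntegral G ord δ S ∅ = 1/2 + δ := by
    rw [treeIntegral, brokenEdgesOn_eq_empty_of_card_le_one ord hS.le]
    simp only [Finset.prod_empty, mul_one]
    rw [MeasureTheory.setIntegral_const, smul_eq_mul, mul_one,
      MeasureTheory.measureReal_def, MeasureTheory.volume_pi_pi]
    simp only [Real.volume_Icc, sub_zero]
    rw [Finset.prod_const, ENNReal.toReal_pow, ENNReal.toReal_ofReal hδ.le]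
    simp [hS]
  rw [treeWeightOn, hvol, hS, Finset.card_empty, pow_zero, mul_one, Nat.cast_one, zpow_neg_one]
  exact inv_mul_cancel₀ hδ.ne'

lemma prod_comps_treeWeight {F : Finset (Sym2 V)} (hF : IsForestOn G Finset.univ F)
    (hδ : 0 < 1/2 + δ) :
    ∏ T ∈ comps F, treeWeight G ord δ T
      = ∏ S ∈ componentPartition F, treeWeightOn G ord δ S (edgesIn F S) := by
  rw [comps_eq_image, Finset.prod_image, Finset.prod_filter]
  · refine Finset.prod_congr rfl fun S hS => ?_
    have hT := isSpanningTreeOn_edgesIn hF hS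
    split_ifs with hne
    · exact hT.treeWeight_eq ord hne
    · rw [Finset.not_nonempty_iff_eq_empty.1 hne] at hT ⊢
      exact (treeWeightOn_empty_of_card_eq_one ord hδ (by simpa using hT.card_add_one.symm)).symm
  · intro S hS S' hS' hSS'
    simp only [Finset.coe_filter, Set.mem_ofPred_eq] at hS hS'
    obtain ⟨e, he⟩ := hS.2
    have he' : e ∈ edgesIn F S' := hSS' ▸ he
    exact (isPartition_componentPartition F).eq_of_mem_of_mem hS.1 hS'.1
      ((mem_edgesIn.1 he).2 _ (Sym2.out_fst_mem e)) ((mem_edgesIn.1 he').2 _ (Sym2.out_fst_mem e))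

end Weights

end

theorem statement5_general (V : Type) [Fintype V] (G : SimpleGraph V) (ord : Sym2 V → ℕ)
    (δ : ℝ) (hδ : δ ∈ Set.Ioo (0:ℝ) (1/2)) (x : ℂ) :
    ∑ k ∈ Finset.range (Fintype.card V + 1),
      (∑ P ∈ Finset.univ.filter (fun P : Finset (Finset V) =>
          (∀ S ∈ P, S.Nonempty) ∧
          (∀ S ∈ P, ∀ S' ∈ P, S ≠ S' → Disjoint S S') ∧
          P.sup id = Finset.univ ∧ P.card + k = Fintype.card V),
        ∏ S ∈ P, (indWeight G ord δ S : ℂ)) * x ^ k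
    = ∑ F ∈ Finset.univ.filter (fun F : Finset (Sym2 V) => IsForestOn G Finset.univ F),
        x ^ F.card * ∏ T ∈ comps F, (treeWeight G ord δ T : ℂ) := by
  have hδ' : 0 < 1/2 + δ := by linarith [hδ.1]
  rw [sum_range_sum_partitions_mul_pow]
  calc _ = ∑ P ∈ Finset.univ.filter IsPartition,
          (∏ S ∈ P, ∑ T ∈ Finset.univ.filter (IsSpanningTreeOn G S),
            (treeWeightOn G ord δ S T : ℂ)) * x ^ (Fintype.card V - P.card) := by
        simp only [indWeight, treeWeightOn, Complex.ofReal_sum]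
    _ = ∑ F ∈ Finset.univ.filter (IsForestOn G Finset.univ),
          (∏ S ∈ componentPartition F, (treeWeightOn G ord δ S (edgesIn F S) : ℂ))
            * x ^ F.card := (sum_forests_eq_sum_partitions G _ x).symm
    _ = _ := Finset.sum_congr rfl fun F hF => by
        rw [mul_comm, ← Complex.ofReal_prod, ← Complex.ofReal_prod,
          prod_comps_treeWeight ord (Finset.mem_filter.1 hF).2 hδ']

/-- For an `n`-vertex graph `G` with a fixed total edge order,
`δ ∈ (0,1/2)` and `x ∈ ℂ`,
`∑_{k≥0} ∑_{P ∈ π_{n−k}(V)} ∏_{S∈P} w(G[S]) · x^k =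
 ∑_{F ⊆ E forest} x^{|F|} ∏_{T comp. of F} w_T`. -/
theorem statement5 (V : Type) [Fintype V] (G : SimpleGraph V) (ord : Sym2 V → ℕ)
    (hord : Function.Injective ord) (δ : ℝ) (hδ : δ ∈ Set.Ioo (0:ℝ) (1/2)) (x : ℂ) :
    ∑ k ∈ Finset.range (Fintype.card V + 1),
      (∑ P ∈ Finset.univ.filter (fun P : Finset (Finset V) =>
          (∀ S ∈ P, S.Nonempty) ∧
          (∀ S ∈ P, ∀ S' ∈ P, S ≠ S' → Disjoint S S') ∧
          P.sup id = Finset.univ ∧ P.card + k = Fintype.card V),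
        ∏ S ∈ P, (indWeight G ord δ S : ℂ)) * x ^ k
    = ∑ F ∈ Finset.univ.filter (fun F : Finset (Sym2 V) => IsForestOn G Finset.univ F),
        x ^ F.card * ∏ T ∈ comps F, (treeWeight G ord δ T : ℂ) :=
  statement5_general V G ord δ hδ x

end VolumePaper
end

section
/- Let Δ > 0, let G be a finite simple graph of maximum degree at most Δ, and let v be a vertex of G. Then for every real a > 1, the rooted tree generating function satisfies T_{G,v}(log(a)/(aΔ)) ≤ a. -/
open MeasureTheory

attribute [local instance] Classical.propDecidable

namespace SimpleGraph

variable {V : Type*} {G : SimpleGraph V}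

lemma Reachable.deleteEdges_or {v u z : V} (h : G.Reachable v z) :
    (G.deleteEdges {s(v, u)}).Reachable v z ∨ (G.deleteEdges {s(v, u)}).Reachable u z := by
  set R := G.deleteEdges {s(v, u)}
  suffices ∀ {a b : V}, G.Walk a b →
      R.Reachable v a ∨ R.Reachable u a → R.Reachable v b ∨ R.Reachable u b from
    h.elim fun p => this p (Or.inl .rfl)
  intro a b p
  induction p with
  | nil => exact id
  | @cons a c b hadj q ih =>
    refine fun hreach => ih ?_
    by_cases he : s(a, c) = s(v, u)
    · rcases Sym2.eq_iff.1 he with ⟨rfl, rfl⟩ | ⟨rfl, rfl⟩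
      · exact Or.inr .rfl
      · exact Or.inl .rfl
    · have hac : R.Reachable a c := (deleteEdges_adj.2 ⟨hadj, he⟩).reachable
      exact hreach.imp (·.trans hac) (·.trans hac)

lemma IsAcyclic.of_induce {s : Set V} (h : (G.induce s).IsAcyclic)
    (hs : ∀ e ∈ G.edgeSet, ∀ z ∈ e, z ∈ s) : G.IsAcyclic := by
  intro u c hc
  have hsupp : ∀ z ∈ c.support, z ∈ s := fun z hz => by
    obtain ⟨e, he, hze⟩ := (Walk.mem_support_iff_exists_mem_edges_of_not_nil hc.not_nil).1 hz
    exact hs e (c.edges_subset_edgeSet he) z hze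
  refine h (c.induce s hsupp) <|
    (Walk.isCycle_map_iff_of_injective (f := (Embedding.induce s).toHom) Subtype.val_injective).1 ?_
  rwa [Walk.map_induce]

lemma fromEdgeSet_coe_erase (T : Finset (Sym2 V)) (e : Sym2 V) :
    fromEdgeSet ↑(T.erase e) = (fromEdgeSet ↑T).deleteEdges {e} := by
  rw [Finset.coe_erase, deleteEdges, fromEdgeSet_sdiff]

lemma reachable_fromEdgeSet_of_walk {s t : Set (Sym2 V)} {a b : V}
    (p : (fromEdgeSet s).Walk a b) (h : ∀ e ∈ p.edges, e ∈ t) : (fromEdgeSet t).Reachable a b :=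
  ⟨p.transfer _ fun e he => by
    have := p.edges_subset_edgeSet he
    rw [edgeSet_fromEdgeSet] at this ⊢
    exact ⟨h e he, this.2⟩⟩

end SimpleGraph

namespace VolumePaper

open SimpleGraph Finset

variable {V : Type}

noncomputable def componentEdges (F : Finset (Sym2 V)) (u : V) : Finset (Sym2 V) :=
  F.filter fun e => ∀ z ∈ e, (fromEdgeSet ↑F).Reachable u z

lemma mem_componentEdges_iff {F : Finset (Sym2 V)} {u : V} {e : Sym2 V} :
    e ∈ componentEdges F u ↔ e ∈ F ∧ ∀ z ∈ e, (fromEdgeSet ↑F).Reachable u z :=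
  mem_filter

lemma componentEdges_subset (F : Finset (Sym2 V)) (u : V) : componentEdges F u ⊆ F :=
  filter_subset _ _

lemma mem_componentEdges {F : Finset (Sym2 V)} {u a b : V} (hab : s(a, b) ∈ F)
    (ha : (fromEdgeSet ↑F).Reachable u a) : s(a, b) ∈ componentEdges F u := by
  refine mem_componentEdges_iff.2 ⟨hab, fun z hz => ?_⟩
  rcases Sym2.mem_iff.1 hz with rfl | rfl
  · exact ha
  · by_cases h : a = z
    · exact h ▸ ha
    · exact ha.trans ((fromEdgeSet_adj _).2 ⟨hab, h⟩).reachable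

lemma disjoint_componentEdges {F : Finset (Sym2 V)} {u v : V}
    (h : ¬(fromEdgeSet ↑F).Reachable u v) : Disjoint (componentEdges F u) (componentEdges F v) := by
  refine disjoint_left.2 fun e hu hv => ?_
  induction e using Sym2.ind with | h a b => ?_
  exact h (((mem_componentEdges_iff.1 hu).2 a (Sym2.mem_mk_left a b)).trans
    ((mem_componentEdges_iff.1 hv).2 a (Sym2.mem_mk_left a b)).symm)

variable [Fintype V]

lemma mem_verts {T : Finset (Sym2 V)} {z : V} : z ∈ verts T ↔ ∃ e ∈ T, z ∈ e := by
  simp [verts]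

lemma verts_mono {S T : Finset (Sym2 V)} (h : S ⊆ T) : verts S ⊆ verts T := fun _ hz =>
  let ⟨e, he, hze⟩ := mem_verts.1 hz
  mem_verts.2 ⟨e, h he, hze⟩

lemma left_mem_verts {T : Finset (Sym2 V)} {a b : V} (h : s(a, b) ∈ T) : a ∈ verts T :=
  mem_verts.2 ⟨_, h, Sym2.mem_mk_left a b⟩

lemma reachable_of_mem_verts_componentEdges {F : Finset (Sym2 V)} {u z : V}
    (hz : z ∈ verts (componentEdges F u)) : (fromEdgeSet ↑F).Reachable u z :=
  let ⟨_, he, hze⟩ := mem_verts.1 hz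
  (mem_componentEdges_iff.1 he).2 z hze

lemma reachable_componentEdges {F : Finset (Sym2 V)} {u z : V}
    (hz : z ∈ verts (componentEdges F u)) : (fromEdgeSet ↑(componentEdges F u)).Reachable u z := by
  obtain ⟨p⟩ := reachable_of_mem_verts_componentEdges hz
  refine reachable_fromEdgeSet_of_walk p fun e he => ?_
  have heF : e ∈ F := by
    have := p.edges_subset_edgeSet he
    rw [edgeSet_fromEdgeSet] at this
    exact this.1
  induction e using Sym2.ind with | h a b => ?_
  exact mem_componentEdges heF ⟨p.takeUntil a (p.fst_mem_support_of_mem_edges he)⟩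

/-- The empty edge set is the tree consisting of the root `v` alone. -/
structure IsRootedTree (G : SimpleGraph V) (A : Finset V) (v : V) (B : Finset V)
    (T : Finset (Sym2 V)) : Prop where
  subset_edgeSet : (↑T : Set (Sym2 V)) ⊆ G.edgeSet
  verts_subset : verts T ⊆ A
  isAcyclic : (fromEdgeSet (↑T : Set (Sym2 V))).IsAcyclic
  reachable : ∀ z ∈ verts T, (fromEdgeSet (↑T : Set (Sym2 V))).Reachable v z
  mem_of_root_edge : ∀ w, s(v, w) ∈ T → w ∈ B

namespace IsRootedTree

variable {G : SimpleGraph V} {A : Finset V} {u v : V} {B : Finset V} {T : Finset (Sym2 V)}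

lemma empty : IsRootedTree G A v B ∅ where
  subset_edgeSet := by simp
  verts_subset := by simp [verts]
  isAcyclic := by simp
  reachable := by simp [verts]
  mem_of_root_edge := by simp

lemma mono {A' B' : Finset V} (hT : IsRootedTree G A v B T) (hA : A ⊆ A') (hB : B ⊆ B') :
    IsRootedTree G A' v B' T :=
  { hT with
    verts_subset := hT.verts_subset.trans hA
    mem_of_root_edge := fun w hw => hB (hT.mem_of_root_edge w hw) }

lemma exists_root_edge (hT : IsRootedTree G A v B T) (hne : T.Nonempty) : ∃ w, s(v, w) ∈ T := by
  obtain ⟨e, he⟩ := hne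
  induction e using Sym2.ind with | h a b => ?_
  obtain ⟨p⟩ := hT.reachable a (left_mem_verts he)
  cases p with
  | nil => exact ⟨b, he⟩
  | cons hadj _ => exact ⟨_, ((fromEdgeSet_adj _).1 hadj).1⟩

lemma eq_empty (hT : IsRootedTree G A v B T) (h : v ∉ A ∨ B = ∅) : T = ∅ := by
  by_contra hne
  obtain ⟨w, hw⟩ := hT.exists_root_edge (nonempty_iff_ne_empty.2 hne)
  rcases h with hv | rfl
  · exact hv (hT.verts_subset (left_mem_verts hw))
  · exact notMem_empty _ (hT.mem_of_root_edge w hw)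

lemma not_reachable_erase (hT : IsRootedTree G A v B T) {a b : V} (he : s(a, b) ∈ T) :
    ¬(fromEdgeSet ↑(T.erase s(a, b))).Reachable a b := by
  rw [fromEdgeSet_coe_erase, ← isBridge_iff]
  exact isAcyclic_iff_forall_adj_isBridge.1 hT.isAcyclic
    ((fromEdgeSet_adj _).2 ⟨he, (G.mem_edgeSet.1 (hT.subset_edgeSet he)).ne⟩)

lemma erase_eq_union (hT : IsRootedTree G A v B T) :
    T.erase s(v, u) =
      componentEdges (T.erase s(v, u)) u ∪ componentEdges (T.erase s(v, u)) v := by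
  refine Subset.antisymm (fun e he' => ?_)
    (union_subset (componentEdges_subset _ _) (componentEdges_subset _ _))
  induction e using Sym2.ind with | h a b => ?_
  rcases (hT.reachable a (left_mem_verts (mem_of_mem_erase he'))).deleteEdges_or (u := u)
    with h | h <;> rw [← fromEdgeSet_coe_erase] at h
  · exact mem_union_right _ (mem_componentEdges he' h)
  · exact mem_union_left _ (mem_componentEdges he' h)

lemma card_eq (hT : IsRootedTree G A v B T) (he : s(v, u) ∈ T) :
    T.card = (componentEdges (T.erase s(v, u)) u).card +
      (componentEdges (T.erase s(v, u)) v).card + 1 := by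
  rw [← card_union_of_disjoint (disjoint_componentEdges fun h => hT.not_reachable_erase he h.symm),
    ← hT.erase_eq_union, card_erase_add_one he]

lemma isRootedTree_componentEdges (hT : IsRootedTree G A v B T) {F : Finset (Sym2 V)}
    (hF : F ⊆ T) {p q : V} (hpq : ¬(fromEdgeSet ↑F).Reachable p q) {C : Finset V}
    (hC : ∀ w, s(p, w) ∈ componentEdges F p → w ∈ C) :
    IsRootedTree G (A.erase q) p C (componentEdges F p) where
  subset_edgeSet := (coe_subset.2 ((componentEdges_subset F p).trans hF)).trans hT.subset_edgeSet
  verts_subset _ hz := mem_erase.2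
    ⟨fun hzq => hpq (hzq ▸ reachable_of_mem_verts_componentEdges hz),
      hT.verts_subset (verts_mono ((componentEdges_subset F p).trans hF) hz)⟩
  isAcyclic :=
    hT.isAcyclic.anti (fromEdgeSet_mono (coe_subset.2 ((componentEdges_subset F p).trans hF)))
  reachable _ hz := reachable_componentEdges hz
  mem_of_root_edge := hC

lemma isRootedTree_componentEdges_child (hT : IsRootedTree G A v B T) (he : s(v, u) ∈ T) :
    IsRootedTree G (A.erase v) u (univ.filter (G.Adj u)) (componentEdges (T.erase s(v, u)) u) :=
  hT.isRootedTree_componentEdges (erase_subset _ _) (fun h => hT.not_reachable_erase he h.symm)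
    fun _ hw => mem_filter.2
      ⟨mem_univ _, hT.subset_edgeSet (mem_of_mem_erase (componentEdges_subset _ _ hw))⟩

lemma isRootedTree_componentEdges_root (hT : IsRootedTree G A v (insert u B) T)
    (he : s(v, u) ∈ T) :
    IsRootedTree G (A.erase u) v B (componentEdges (T.erase s(v, u)) v) :=
  hT.isRootedTree_componentEdges (erase_subset _ _) (hT.not_reachable_erase he) fun w hw => by
    obtain ⟨hne, hwT⟩ := mem_erase.1 (componentEdges_subset _ _ hw)
    exact (mem_insert.1 (hT.mem_of_root_edge w hwT)).resolve_left (by rintro rfl; exact hne rfl)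

end IsRootedTree

noncomputable def rootedTrees (G : SimpleGraph V) (A : Finset V) (v : V) (B : Finset V) :
    Finset (Finset (Sym2 V)) :=
  univ.filter (IsRootedTree G A v B)

lemma mem_rootedTrees {G : SimpleGraph V} {A : Finset V} {v : V} {B : Finset V}
    {T : Finset (Sym2 V)} : T ∈ rootedTrees G A v B ↔ IsRootedTree G A v B T := by
  simp [rootedTrees]

noncomputable def treeSum (G : SimpleGraph V) (A : Finset V) (v : V) (B : Finset V) (x : ℝ) : ℝ :=
  ∑ T ∈ rootedTrees G A v B, x ^ T.card

section TreeSum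

variable {G : SimpleGraph V} {A : Finset V} {u v : V} {B : Finset V} {x : ℝ}

lemma treeSum_nonneg (hx : 0 ≤ x) : 0 ≤ treeSum G A v B x :=
  sum_nonneg fun _ _ => pow_nonneg hx _

lemma treeSum_mono_left {A' : Finset V} (hx : 0 ≤ x) (hA : A ⊆ A') :
    treeSum G A v B x ≤ treeSum G A' v B x :=
  sum_le_sum_of_subset_of_nonneg
    (fun _ hT => mem_rootedTrees.2 ((mem_rootedTrees.1 hT).mono hA subset_rfl))
    fun _ _ _ => pow_nonneg hx _

lemma treeSum_eq_one (h : v ∉ A ∨ B = ∅) : treeSum G A v B x = 1 := by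
  have : rootedTrees G A v B = {∅} := eq_singleton_iff_unique_mem.2
    ⟨mem_rootedTrees.2 .empty, fun _ hT => (mem_rootedTrees.1 hT).eq_empty h⟩
  simp [treeSum, this]

/-- Cutting the root edge `s(v, u)` splits a tree injectively into a tree rooted at `u` that
avoids `v` and a tree rooted at `v` that avoids `u`. -/
lemma sum_filter_mem_rootedTrees_le (hx : 0 ≤ x) :
    ∑ T ∈ (rootedTrees G A v (insert u B)).filter (s(v, u) ∈ ·), x ^ T.card ≤
      x * (treeSum G (A.erase v) u (univ.filter (G.Adj u)) x * treeSum G (A.erase u) v B x) := by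
  set S := (rootedTrees G A v (insert u B)).filter (s(v, u) ∈ ·)
  set split : Finset (Sym2 V) → Finset (Sym2 V) × Finset (Sym2 V) := fun T =>
    (componentEdges (T.erase s(v, u)) u, componentEdges (T.erase s(v, u)) v)
  have hS : ∀ T ∈ S, IsRootedTree G A v (insert u B) T ∧ s(v, u) ∈ T := fun T hT =>
    (mem_filter.1 hT).imp_left mem_rootedTrees.1
  have hsplit_inj : Set.InjOn split S := fun T₁ h₁ T₂ h₂ h => by
    obtain ⟨hT₁, he₁⟩ := hS T₁ h₁
    obtain ⟨hT₂, he₂⟩ := hS T₂ h₂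
    have herase : T₁.erase s(v, u) = T₂.erase s(v, u) := by
      rw [hT₁.erase_eq_union, hT₂.erase_eq_union]
      exact congrArg₂ (· ∪ ·) (congrArg Prod.fst h) (congrArg Prod.snd h)
    rw [← insert_erase he₁, ← insert_erase he₂, herase]
  have hsplit_maps : ∀ T ∈ S, split T ∈
      rootedTrees G (A.erase v) u (univ.filter (G.Adj u)) ×ˢ rootedTrees G (A.erase u) v B :=
    fun T hT => mem_product.2
      ⟨mem_rootedTrees.2 ((hS T hT).1.isRootedTree_componentEdges_child (hS T hT).2),
        mem_rootedTrees.2 ((hS T hT).1.isRootedTree_componentEdges_root (hS T hT).2)⟩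
  calc ∑ T ∈ S, x ^ T.card
      = ∑ T ∈ S, x * (x ^ (split T).1.card * x ^ (split T).2.card) :=
        sum_congr rfl fun T hT => by rw [(hS T hT).1.card_eq (hS T hT).2]; ring
    _ = ∑ p ∈ S.image split, x * (x ^ p.1.card * x ^ p.2.card) :=
        (sum_image (f := fun p => x * (x ^ p.1.card * x ^ p.2.card)) hsplit_inj).symm
    _ ≤ ∑ p ∈ rootedTrees G (A.erase v) u (univ.filter (G.Adj u)) ×ˢ
          rootedTrees G (A.erase u) v B, x * (x ^ p.1.card * x ^ p.2.card) :=
        sum_le_sum_of_subset_of_nonneg (image_subset_iff.2 hsplit_maps)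
          fun _ _ _ => by positivity
    _ = _ := by rw [← mul_sum, sum_product, treeSum, treeSum, sum_mul_sum]

lemma treeSum_insert_le (hx : 0 ≤ x) :
    treeSum G A v (insert u B) x ≤ treeSum G A v B x +
      x * (treeSum G (A.erase v) u (univ.filter (G.Adj u)) x * treeSum G (A.erase u) v B x) := by
  rw [treeSum, ← sum_filter_not_add_sum_filter _ (s(v, u) ∈ ·)]
  refine add_le_add (sum_le_sum_of_subset_of_nonneg (fun T hT => ?_) fun _ _ _ => pow_nonneg hx _)
    (sum_filter_mem_rootedTrees_le hx)
  obtain ⟨hT, he⟩ := mem_filter.1 hT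
  have hT := mem_rootedTrees.1 hT
  refine mem_rootedTrees.2 { hT with mem_of_root_edge := fun w hw => ?_ }
  exact (mem_insert.1 (hT.mem_of_root_edge w hw)).resolve_left (by rintro rfl; exact he hw)

theorem treeSum_le_pow {a : ℝ} (hx : 0 ≤ x) (ha : 0 ≤ a)
    (hdeg : ∀ w, (1 + x * a) ^ (univ.filter (G.Adj w)).card ≤ a) (A : Finset V) (v : V)
    (B : Finset V) : treeSum G A v B x ≤ (1 + x * a) ^ B.card := by
  have hxa : 0 ≤ x * a := mul_nonneg hx ha
  induction A using Finset.strongInduction generalizing v B with | H A ih => ?_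
  by_cases hv : v ∉ A
  · rw [treeSum_eq_one (Or.inl hv)]
    exact one_le_pow₀ (by linarith)
  induction B using Finset.induction_on with
  | empty => rw [treeSum_eq_one (Or.inr rfl), card_empty, pow_zero]
  | insert u B hu ihB =>
    have hchild : treeSum G (A.erase v) u (univ.filter (G.Adj u)) x ≤ a :=
      (ih _ (erase_ssubset (not_not.1 hv)) u _).trans (hdeg u)
    have hroot : treeSum G (A.erase u) v B x ≤ (1 + x * a) ^ B.card :=
      (treeSum_mono_left hx (erase_subset u A)).trans ihB
    calc treeSum G A v (insert u B) x
        ≤ treeSum G A v B x + x * (treeSum G (A.erase v) u (univ.filter (G.Adj u)) x *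
            treeSum G (A.erase u) v B x) := treeSum_insert_le hx
      _ ≤ (1 + x * a) ^ B.card + x * (a * (1 + x * a) ^ B.card) :=
        add_le_add ihB (mul_le_mul_of_nonneg_left
          (mul_le_mul hchild hroot (treeSum_nonneg hx) ha) hx)
      _ = (1 + x * a) ^ (insert u B).card := by rw [card_insert_of_notMem hu, pow_succ]; ring

end TreeSum

lemma one_add_log_div_pow_le {a Δ : ℝ} (hΔ : 0 < Δ) (ha : 1 ≤ a) {d : ℕ} (hd : (d : ℝ) ≤ Δ) :
    (1 + Real.log a / Δ) ^ d ≤ a := by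
  have hlog : 0 ≤ Real.log a / Δ := div_nonneg (Real.log_nonneg ha) hΔ.le
  calc (1 + Real.log a / Δ) ^ d
      ≤ Real.exp (Real.log a / Δ) ^ d :=
        pow_le_pow_left₀ (by linarith) (by linarith [Real.add_one_le_exp (Real.log a / Δ)]) d
    _ = Real.exp (d * (Real.log a / Δ)) := (Real.exp_nat_mul _ d).symm
    _ ≤ Real.exp (Δ * (Real.log a / Δ)) :=
        Real.exp_le_exp.2 (mul_le_mul_of_nonneg_right hd hlog)
    _ = a := by rw [mul_div_cancel₀ _ hΔ.ne', Real.exp_log (by linarith)]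

lemma IsTreeSet.isRootedTree {G : SimpleGraph V} {T : Finset (Sym2 V)} {v : V}
    (hG : (↑T : Set (Sym2 V)) ⊆ G.edgeSet) (hT : IsTreeSet T) (hv : v ∈ verts T) :
    IsRootedTree G univ v (univ.filter (G.Adj v)) T where
  subset_edgeSet := hG
  verts_subset := subset_univ _
  isAcyclic := hT.isAcyclic.of_induce fun e he z hz =>
    mem_coe.2 (mem_verts.2 ⟨e, (edgeSet_fromEdgeSet _ ▸ he).1, hz⟩)
  reachable z hz := by
    simpa using (hT.connected.preconnected ⟨v, mem_coe.2 hv⟩ ⟨z, mem_coe.2 hz⟩).map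
      (Embedding.induce _).toHom
  mem_of_root_edge _ hw := mem_filter.2 ⟨mem_univ _, hG hw⟩

/-- For a graph `G` of maximum degree at most `Δ > 0`, a vertex `v`
and a real `a > 1`, the rooted tree generating function satisfies
`T_{G,v}(log a / (aΔ)) ≤ a` (the sum being over all edge sets `T ⊆ E(G)` forming a
tree whose vertex set contains `v`, including the empty edge set). -/
theorem statement8 (Δ : ℝ) (hΔ : 0 < Δ) (V : Type) [Fintype V] (G : SimpleGraph V)
    (hdeg : maxDegreeLE G Δ) (v : V) (a : ℝ) (ha : 1 < a) :
    ∑ T ∈ Finset.univ.filter (fun T : Finset (Sym2 V) =>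
        (↑T : Set (Sym2 V)) ⊆ G.edgeSet ∧ (T = ∅ ∨ (IsTreeSet T ∧ v ∈ verts T))),
      (Real.log a / (a * Δ)) ^ T.card ≤ a := by
  set x := Real.log a / (a * Δ)
  have hx : 0 ≤ x := div_nonneg (Real.log_nonneg ha.le) (by positivity)
  have hxa : x * a = Real.log a / Δ := by
    simp only [x]
    field_simp
  have hpow : ∀ w, (1 + x * a) ^ (univ.filter (G.Adj w)).card ≤ a := fun w =>
    hxa ▸ one_add_log_div_pow_le hΔ ha.le (hdeg w)
  have htrees : univ.filter (fun T : Finset (Sym2 V) => (↑T : Set (Sym2 V)) ⊆ G.edgeSet ∧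
      (T = ∅ ∨ (IsTreeSet T ∧ v ∈ verts T))) ⊆ rootedTrees G univ v (univ.filter (G.Adj v)) :=
    fun T hT => mem_rootedTrees.2 <| by
      obtain ⟨hG, rfl | ⟨hT, hv⟩⟩ := (mem_filter.1 hT).2
      exacts [.empty, hT.isRootedTree hG hv]
  calc _ ≤ treeSum G univ v (univ.filter (G.Adj v)) x :=
        sum_le_sum_of_subset_of_nonneg htrees fun _ _ _ => pow_nonneg hx _
    _ ≤ (1 + x * a) ^ (univ.filter (G.Adj v)).card :=
        treeSum_le_pow hx (by linarith) hpow _ _ _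
    _ ≤ a := hpow v

end VolumePaper
end

section
/- Let G=(V,E) be a finite simple graph with a fixed total order on E and let δ ∈ (0,1/2). For every subset T ⊆ E forming a tree with at least one edge, the weight satisfies |w_T| ≤ (2δ/(1/2+δ))^{|V(T)|}. -/
open MeasureTheory

attribute [local instance] Classical.propDecidable

namespace VolumePaper

variable {V : Type} [Fintype V]

/-!
Every vertex `v` of `T` lies on a tree edge `uv`, and `x_u ≤ 1/2 + δ` on the box, so
`1[x_u + x_v > 1]` vanishes as soon as `x_v ≤ 1/2 - δ`. Hence the integrand, which takes values
in `[0, 1]`, is supported in `(1/2 - δ, 1/2 + δ]^{V(T)}`, a box of volume `(2δ)^{|V(T)|}`.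
-/

theorem norm_setIntegral_le_of_eq_zero_off {α E : Type*} [MeasurableSpace α]
    [NormedAddCommGroup E] [NormedSpace ℝ E] {μ : Measure α} {f : α → E} {s t : Set α} {M : ℝ}
    (hs : MeasurableSet s) (ht : μ t < ⊤) (hM0 : 0 ≤ M) (hM : ∀ x ∈ s ∩ t, ‖f x‖ ≤ M)
    (hf : ∀ x ∈ s, x ∉ t → f x = 0) :
    ‖∫ x in s, f x ∂μ‖ ≤ M * μ.real t := by
  rw [setIntegral_eq_of_subset_of_forall_sdiff_eq_zero hs Set.inter_subset_left
    fun x hx => hf x hx.1 fun hxt => hx.2 ⟨hx.1, hxt⟩]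
  calc ‖∫ x in s ∩ t, f x ∂μ‖ ≤ M * μ.real (s ∩ t) :=
        norm_setIntegral_le_of_norm_le_const
          ((measure_mono Set.inter_subset_right).trans_lt ht) hM
    _ ≤ M * μ.real t :=
        mul_le_mul_of_nonneg_left (measureReal_mono Set.inter_subset_right ht.ne) hM0

theorem volume_real_pi_Ioc_const {ι : Type*} [Fintype ι] {a b : ℝ} (hab : a ≤ b) :
    volume.real (Set.univ.pi fun _ : ι => Set.Ioc a b) = (b - a) ^ Fintype.card ι := by
  rw [measureReal_def, Real.volume_pi_Ioc_toReal fun _ => hab, Finset.prod_const,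
    Finset.card_univ]

theorem indGt_mem_unitInterval {α : Type} (x : α → ℝ) (e : Sym2 α) :
    indGt x e ∈ unitInterval := by
  induction e using Sym2.ind with
  | _ u v => simp only [indGt, Sym2.lift_mk]; split <;> simp

theorem indLe_mem_unitInterval {α : Type} (x : α → ℝ) (e : Sym2 α) :
    indLe x e ∈ unitInterval := by
  induction e using Sym2.ind with
  | _ u v => simp only [indLe, Sym2.lift_mk]; split <;> simp

theorem indGt_mk_eq_zero {α : Type} {x : α → ℝ} {u v : α} (h : x u + x v ≤ 1) :
    indGt x s(u, v) = 0 := by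
  simp [indGt, h]

theorem prod_indGt_eq_zero {T : Finset (Sym2 V)} {x : V → ℝ} {v : V} (hv : v ∈ verts T)
    (h : ∀ u, x v + x u ≤ 1) : ∏ e ∈ T, indGt x e = 0 := by
  obtain ⟨e, heT, hve⟩ := (Finset.mem_filter.mp hv).2
  obtain ⟨u, rfl⟩ := Sym2.mem_iff_exists.mp hve
  exact Finset.prod_eq_zero heT (indGt_mk_eq_zero (h u))

theorem extFun_le {α : Type} {S : Finset α} {x : {v // v ∈ S} → ℝ} {c : ℝ} (hc : 0 ≤ c)
    (hx : ∀ i, x i ≤ c) (v : α) : extFun S x v ≤ c := by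
  unfold extFun
  split_ifs
  exacts [hx _, hc]

/-- The integrand of `treeIntegral`, up to definitional unfolding. -/
noncomputable def treeIntegrand (G : SimpleGraph V) (ord : Sym2 V → ℕ) (S : Finset V)
    (T : Finset (Sym2 V)) (x : {v // v ∈ S} → ℝ) : ℝ :=
  (∏ e ∈ T, indGt (extFun S x) e) * ∏ e ∈ brokenEdgesOn G ord S T, indLe (extFun S x) e

theorem treeIntegrand_mem_unitInterval (G : SimpleGraph V) (ord : Sym2 V → ℕ) (S : Finset V)
    (T : Finset (Sym2 V)) (x : {v // v ∈ S} → ℝ) : treeIntegrand G ord S T x ∈ unitInterval :=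
  unitInterval.mul_mem (unitInterval.prod_mem fun e _ => indGt_mem_unitInterval _ e)
    (unitInterval.prod_mem fun e _ => indLe_mem_unitInterval _ e)

theorem treeIntegrand_eq_zero_of_le (G : SimpleGraph V) (ord : Sym2 V → ℕ) {δ : ℝ}
    (hδ : 0 ≤ 1 / 2 + δ) (T : Finset (Sym2 V)) {x : {v // v ∈ verts T} → ℝ}
    (hx : ∀ i, x i ≤ 1 / 2 + δ) {v : {v // v ∈ verts T}} (hv : x v ≤ 1 / 2 - δ) :
    treeIntegrand G ord (verts T) T x = 0 := by
  have hxv : extFun (verts T) x v = x v := dif_pos v.2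
  refine mul_eq_zero_of_left (prod_indGt_eq_zero v.2 fun u => ?_) _
  linarith [extFun_le hδ hx u]

theorem abs_treeIntegral_verts_le (G : SimpleGraph V) (ord : Sym2 V → ℕ) {δ : ℝ} (hδ : 0 ≤ δ)
    (T : Finset (Sym2 V)) :
    |treeIntegral G ord δ (verts T) T| ≤ (2 * δ) ^ (verts T).card := by
  have hslab : volume (Set.univ.pi fun _ : {v // v ∈ verts T} => Set.Ioc (1 / 2 - δ) (1 / 2 + δ))
      < ⊤ := by
    rw [Real.volume_pi_Ioc]
    exact ENNReal.prod_lt_top fun _ _ => ENNReal.ofReal_lt_top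
  have hbound := norm_setIntegral_le_of_eq_zero_off (f := treeIntegrand G ord (verts T) T)
    (s := Set.univ.pi fun _ => Set.Icc 0 (1 / 2 + δ))
    (MeasurableSet.univ_pi fun _ => measurableSet_Icc) hslab zero_le_one
    (fun x _ => by
      obtain ⟨h0, h1⟩ := treeIntegrand_mem_unitInterval G ord (verts T) T x
      rwa [Real.norm_of_nonneg h0])
    (fun x hx hxC => by
      obtain ⟨v, -, hv⟩ := not_forall₂.mp hxC
      have hxv := hx v (Set.mem_univ v)
      exact treeIntegrand_eq_zero_of_le G ord (by linarith) T
        (fun i => (hx i (Set.mem_univ i)).2) (not_lt.mp fun h => hv ⟨h, hxv.2⟩))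
  rw [volume_real_pi_Ioc_const (by linarith), Fintype.card_coe, one_mul,
    show 1 / 2 + δ - (1 / 2 - δ) = 2 * δ by ring] at hbound
  exact hbound

theorem statement9_general (V : Type) [Fintype V] (G : SimpleGraph V) (ord : Sym2 V → ℕ)
    (δ : ℝ) (hδ : δ ∈ Set.Ioo (0:ℝ) (1/2))
    (T : Finset (Sym2 V)) :
    |treeWeight G ord δ T| ≤ (2 * δ / (1/2 + δ)) ^ (verts T).card := by
  have hpos : (0 : ℝ) < 1 / 2 + δ := by linarith [hδ.1]
  have hsign : |(-1 : ℝ) ^ T.card| = 1 := by simp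
  have hscale : |(1 / 2 + δ) ^ (-((verts T).card : ℤ))| = ((1 / 2 + δ) ^ (verts T).card)⁻¹ := by
    rw [abs_of_pos (zpow_pos hpos _), zpow_neg, zpow_natCast]
  rw [treeWeight, abs_mul, abs_mul, hsign, hscale, mul_one, div_pow,
    div_eq_inv_mul ((2 * δ) ^ (verts T).card)]
  exact mul_le_mul_of_nonneg_left (abs_treeIntegral_verts_le G ord hδ.1.le T)
    (inv_nonneg.mpr (pow_nonneg hpos.le _))

/-- For every edge set `T ⊆ E(G)` forming a tree (with at least one
edge), `|w_T| ≤ (2δ/(1/2+δ))^{|V(T)|}`. -/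
theorem statement9 (V : Type) [Fintype V] (G : SimpleGraph V) (ord : Sym2 V → ℕ)
    (hord : Function.Injective ord) (δ : ℝ) (hδ : δ ∈ Set.Ioo (0:ℝ) (1/2))
    (T : Finset (Sym2 V)) (hTE : (↑T : Set (Sym2 V)) ⊆ G.edgeSet) (hT : IsTreeSet T) :
    |treeWeight G ord δ T| ≤ (2 * δ / (1/2 + δ)) ^ (verts T).card :=
  statement9_general V G ord δ hδ T

end VolumePaper
end

section
/- Let δ ∈ (0,1/2), let S be a finite set with |S| ≥ 2, and let T be a set of pairs of elements of S forming a tree with vertex set S. Then ∫_{[0,1/2+δ]^S} ∏_{uv∈T} 1[x_u+x_v>1] dx ≤ (2δ)^{|S|}; indeed, the set {x ∈ [0,1/2+δ]^S : x_u+x_v > 1 for all uv ∈ T} is contained in the box [1/2−δ, 1/2+δ]^S. -/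
/-!
Every vertex `v` lies on some edge `uv` of `T`, and `x_u + x_v > 1` together with
`x_u ≤ 1/2 + δ` forces `x_v > 1/2 - δ`. Since the integrand is the indicator of the region
where all edge constraints hold, the integral is at most the volume `(2δ)^|S|` of the box
`[1/2 - δ, 1/2 + δ]^S`.
-/

open MeasureTheory

attribute [local instance] Classical.propDecidable

namespace VolumePaper

variable {V : Type} [Fintype V]

theorem indGt_mk {ι : Type} (x : ι → ℝ) (u v : ι) :
    indGt x s(u, v) = if 1 < x u + x v then 1 else 0 :=
  rfl

theorem indGt_eq_zero_or_one {ι : Type} (x : ι → ℝ) (e : Sym2 ι) :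
    indGt x e = 0 ∨ indGt x e = 1 := by
  induction e using Sym2.ind with
  | _ u v => rw [indGt_mk]; split_ifs <;> simp

theorem measurable_indGt {ι : Type} (e : Sym2 ι) : Measurable fun x : ι → ℝ => indGt x e := by
  induction e using Sym2.ind with
  | _ u v =>
    simp only [indGt_mk]
    exact Measurable.ite (measurableSet_lt measurable_const (by fun_prop))
      measurable_const measurable_const

theorem measurableSet_forall_indGt_eq_one {ι : Type} (T : Finset (Sym2 ι)) :
    MeasurableSet {x : ι → ℝ | ∀ e ∈ T, indGt x e = 1} := by
  simp only [Set.ofPred_forall]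
  exact MeasurableSet.biInter T.countable_toSet fun e _ =>
    measurable_indGt e (measurableSet_singleton 1)

theorem prod_indGt_eq_indicator {ι : Type} (T : Finset (Sym2 ι)) (x : ι → ℝ) :
    ∏ e ∈ T, indGt x e = {y : ι → ℝ | ∀ e ∈ T, indGt y e = 1}.indicator 1 x := by
  rw [Set.indicator_apply, Pi.one_apply]
  split_ifs with hx
  · exact Finset.prod_eq_one hx
  · simp only [Set.mem_ofPred_eq, not_forall] at hx
    obtain ⟨e, heT, he⟩ := hx
    exact Finset.prod_eq_zero heT ((indGt_eq_zero_or_one x e).resolve_right he)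

theorem half_sub_lt_of_indGt_eq_one {ι : Type} {x : ι → ℝ} {δ : ℝ} (hx : ∀ w, x w ≤ 1/2 + δ)
    {e : Sym2 ι} (he : indGt x e = 1) {v : ι} (hv : v ∈ e) : 1/2 - δ < x v := by
  obtain ⟨u, rfl⟩ := Sym2.mem_iff_exists.mp hv
  rw [indGt_mk] at he
  split_ifs at he with h
  · linarith [hx u]
  · exact absurd he zero_ne_one

theorem setOf_forall_indGt_eq_one_subset (δ : ℝ) {T : Finset (Sym2 V)}
    (hspan : verts T = Finset.univ) :
    {x : V → ℝ | (∀ v, x v ∈ Set.Icc (0:ℝ) (1/2 + δ)) ∧ ∀ e ∈ T, indGt x e = 1} ⊆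
      {x : V → ℝ | ∀ v, x v ∈ Set.Icc (1/2 - δ) (1/2 + δ)} := by
  rintro x ⟨hbox, hT⟩ v
  have hv : v ∈ verts T := hspan ▸ Finset.mem_univ v
  obtain ⟨-, e, heT, hve⟩ := Finset.mem_filter.mp hv
  exact ⟨(half_sub_lt_of_indGt_eq_one (fun w => (hbox w).2) (hT e heT) hve).le, (hbox v).2⟩

theorem volume_real_univ_pi_Icc {ι : Type*} [Fintype ι] {a b : ℝ} (hab : a ≤ b) :
    volume.real (Set.univ.pi fun _ : ι => Set.Icc a b) = (b - a) ^ Fintype.card ι := by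
  rw [measureReal_def, volume_pi_pi, Real.volume_Icc, Finset.prod_const, Finset.card_univ,
    ENNReal.toReal_pow, ENNReal.toReal_ofReal (sub_nonneg.mpr hab)]

theorem statement10_general (V : Type) [Fintype V] (δ : ℝ)
    (hδ : δ ∈ Set.Ioo (0:ℝ) (1/2)) (T : Finset (Sym2 V))
    (hspan : verts T = Finset.univ) :
    ({x : V → ℝ | (∀ v, x v ∈ Set.Icc (0:ℝ) (1/2 + δ)) ∧ ∀ e ∈ T, indGt x e = 1} ⊆
      {x : V → ℝ | ∀ v, x v ∈ Set.Icc (1/2 - δ) (1/2 + δ)}) ∧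
    (∫ x : V → ℝ in Set.univ.pi (fun _ => Set.Icc (0:ℝ) (1/2 + δ)),
        ∏ e ∈ T, indGt x e) ≤ (2 * δ) ^ Fintype.card V := by
  have hsub := setOf_forall_indGt_eq_one_subset δ hspan
  refine ⟨hsub, ?_⟩
  set B := Set.univ.pi fun _ : V => Set.Icc (0:ℝ) (1/2 + δ)
  set A := {x : V → ℝ | ∀ e ∈ T, indGt x e = 1}
  have hAB : A ∩ B ⊆ Set.univ.pi fun _ => Set.Icc (1/2 - δ) (1/2 + δ) := fun x hx =>
    Set.mem_univ_pi.mpr (hsub ⟨Set.mem_univ_pi.mp hx.2, hx.1⟩)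
  calc ∫ x in B, ∏ e ∈ T, indGt x e
      = volume.real (A ∩ B) := by
        simp_rw [prod_indGt_eq_indicator]
        rw [integral_indicator_one (measurableSet_forall_indGt_eq_one T),
          measureReal_restrict_apply (measurableSet_forall_indGt_eq_one T)]
    _ ≤ volume.real (Set.univ.pi fun _ : V => Set.Icc (1/2 - δ) (1/2 + δ)) :=
        measureReal_mono hAB (isCompact_univ_pi fun _ => isCompact_Icc).measure_lt_top.ne
    _ = (2 * δ) ^ Fintype.card V := by
        rw [volume_real_univ_pi_Icc (by linarith [hδ.1])]
        congr 1
        ring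

/-- For `δ ∈ (0,1/2)`, a finite vertex set of size at least 2 and a
set `T` of pairs forming a spanning tree, the region of the box `[0,1/2+δ]^S` where
`x_u + x_v > 1` for all `uv ∈ T` is contained in `[1/2−δ,1/2+δ]^S`, and
`∫_{[0,1/2+δ]^S} ∏_{uv∈T} 1[x_u+x_v>1] dx ≤ (2δ)^{|S|}`. -/
theorem statement10 (V : Type) [Fintype V] (hV : 2 ≤ Fintype.card V) (δ : ℝ)
    (hδ : δ ∈ Set.Ioo (0:ℝ) (1/2)) (T : Finset (Sym2 V)) (hT : IsTreeSet T)
    (hspan : verts T = Finset.univ) :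
    ({x : V → ℝ | (∀ v, x v ∈ Set.Icc (0:ℝ) (1/2 + δ)) ∧ ∀ e ∈ T, indGt x e = 1} ⊆
      {x : V → ℝ | ∀ v, x v ∈ Set.Icc (1/2 - δ) (1/2 + δ)}) ∧
    (∫ x : V → ℝ in Set.univ.pi (fun _ => Set.Icc (0:ℝ) (1/2 + δ)),
        ∏ e ∈ T, indGt x e) ≤ (2 * δ) ^ Fintype.card V :=
  statement10_general V δ hδ T hspan

end VolumePaper
end

section
/- Let δ ∈ (0,1/2), let G=(V,E) be a connected finite simple graph on at least 2 vertices with a fixed total order on E, let T ⊆ E be a spanning tree of G with broken edge set E_T, and let f(x) := ∏_{uv∈T} 1[x_u+x_v>1] · ∏_{st∈E_T} 1[x_s+x_t≤1]. If x ∈ [0, 1/2+δ]^V and f(x) ≠ 0, then x ∈ [1/2−δ, 1/2+δ]^V. Consequently ∫_{[0,1/2+δ]^V} f dμ = ∫_{[1/2−δ,1/2+δ]^V} f dμ. -/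
open MeasureTheory

attribute [local instance] Classical.propDecidable

namespace VolumePaper

variable {V : Type} [Fintype V]

/-- For a connected graph `G` on at least two vertices, a spanning
tree `T` with broken edge set `E_T`, and
`f(x) = ∏_{uv∈T} 1[x_u+x_v>1] ∏_{st∈E_T} 1[x_s+x_t≤1]`: if `x ∈ [0,1/2+δ]^V` and
`f(x) ≠ 0` then `x ∈ [1/2−δ,1/2+δ]^V`; consequently the integral of `f` over the two
boxes agree. -/
theorem statement13 (δ : ℝ) (hδ : δ ∈ Set.Ioo (0:ℝ) (1/2)) (V : Type) [Fintype V]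
    (hcard : 2 ≤ Fintype.card V) (G : SimpleGraph V) (hconn : G.Connected)
    (ord : Sym2 V → ℕ) (hord : Function.Injective ord) (T : Finset (Sym2 V))
    (hTE : (↑T : Set (Sym2 V)) ⊆ G.edgeSet)
    (hT : (SimpleGraph.fromEdgeSet (↑T : Set (Sym2 V))).IsTree) :
    (∀ x : V → ℝ, (∀ v, x v ∈ Set.Icc (0:ℝ) (1/2 + δ)) →
        (∏ e ∈ T, indGt x e) *
          (∏ e ∈ brokenEdgesOn G ord Finset.univ T, indLe x e) ≠ 0 →
        ∀ v, x v ∈ Set.Icc (1/2 - δ) (1/2 + δ)) ∧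
    (∫ x : V → ℝ in Set.univ.pi (fun _ => Set.Icc (0:ℝ) (1/2 + δ)),
        (∏ e ∈ T, indGt x e) * ∏ e ∈ brokenEdgesOn G ord Finset.univ T, indLe x e)
      = ∫ x : V → ℝ in Set.univ.pi (fun _ => Set.Icc (1/2 - δ) (1/2 + δ)),
          (∏ e ∈ T, indGt x e) * ∏ e ∈ brokenEdgesOn G ord Finset.univ T, indLe x e := by
  have key : ∀ x : V → ℝ, (∀ v, x v ∈ Set.Icc (0:ℝ) (1/2 + δ)) →
      (∏ e ∈ T, indGt x e) *
        (∏ e ∈ brokenEdgesOn G ord Finset.univ T, indLe x e) ≠ 0 →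
      ∀ v, x v ∈ Set.Icc (1/2 - δ) (1/2 + δ) := by
    intro x hx hf v
    -- find a tree edge containing v
    obtain ⟨u, hu⟩ := Fintype.exists_ne_of_one_lt_card (by omega) v
    have hreach : (SimpleGraph.fromEdgeSet (↑T : Set (Sym2 V))).Reachable v u :=
      hT.isConnected.preconnected v u
    obtain ⟨w⟩ := hreach
    have hadj : ∃ u', (SimpleGraph.fromEdgeSet (↑T : Set (Sym2 V))).Adj v u' := by
      cases w with
      | nil => exact absurd rfl hu.symm
      | cons h p => exact ⟨_, h⟩
    obtain ⟨u', hadj⟩ := hadj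
    rw [SimpleGraph.fromEdgeSet_adj] at hadj
    have he : s(v, u') ∈ T := hadj.1
    have h1 : indGt x s(v, u') ≠ 0 := by
      have := (Finset.prod_ne_zero_iff.mp (left_ne_zero_of_mul hf)) _ he
      exact this
    have h2 : 1 < x v + x u' := by
      by_contra h
      apply h1
      simp [indGt, h]
    have := (hx u').2
    constructor
    · linarith
    · exact (hx v).2
  refine ⟨key, ?_⟩
  have hA : MeasurableSet (Set.univ.pi (fun _ : V => Set.Icc (0:ℝ) (1/2 + δ))) :=
    MeasurableSet.univ_pi (fun _ => measurableSet_Icc)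
  have hB : MeasurableSet (Set.univ.pi (fun _ : V => Set.Icc (1/2 - δ) (1/2 + δ))) :=
    MeasurableSet.univ_pi (fun _ => measurableSet_Icc)
  rw [← MeasureTheory.integral_indicator hA, ← MeasureTheory.integral_indicator hB]
  congr 1
  funext x
  by_cases hxB : x ∈ Set.univ.pi (fun _ : V => Set.Icc (1/2 - δ) (1/2 + δ))
  · have hxA : x ∈ Set.univ.pi (fun _ : V => Set.Icc (0:ℝ) (1/2 + δ)) := by
      intro v _
      have := hxB v (Set.mem_univ v)
      exact ⟨by linarith [hδ.2, this.1], this.2⟩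
    rw [Set.indicator_of_mem hxA, Set.indicator_of_mem hxB]
  · rw [Set.indicator_of_notMem hxB]
    by_cases hxA : x ∈ Set.univ.pi (fun _ : V => Set.Icc (0:ℝ) (1/2 + δ))
    · rw [Set.indicator_of_mem hxA]
      by_contra hne
      apply hxB
      intro v _
      exact key x (fun v => hxA v (Set.mem_univ v)) hne v
    · rw [Set.indicator_of_notMem hxA]

end VolumePaper
end
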